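/- arXiv:2511.01944 — 5 statements merged into one kernel-verified Lean document; each statement's English description precedes it below -/
import Mathlib

section
/- Let f : [a,b] × E → E be continuous, u₀ ∈ E, and let u : [a,b] → E be continuous with u(a) = u₀. Suppose that for every t ∈ [a,b] the Caputo fractional derivative (ᶜD^α_a u)(t) exists and equals f(t, u(t)). Then u satisfies the Volterra integral equation u(t) = u₀ + (1/Γ(α)) ∫_a^t (t-s)^{α-1} f(s, u(s)) ds for every t ∈ [a,b]. -/
open MeasureTheory Set intervalIntegral Filter



lemma int_sub_rpow (p : ℝ) (hp : -1 < p) (c a b : ℝ) :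
    ∫ s in a..b, (c - s) ^ p = ((c - a) ^ (p+1) - (c - b) ^ (p+1)) / (p+1) := by
  rw [show (fun s => (c - s) ^ p) = fun s => ((fun x : ℝ => x ^ p) (c - s)) from rfl,
    intervalIntegral.integral_comp_sub_left (fun x : ℝ => x ^ p) c,
    integral_rpow (Or.inl hp)]

lemma int_rpow_sub (q : ℝ) (hq : -1 < q) (c a b : ℝ) :
    ∫ s in a..b, (s - c) ^ q = ((b - c) ^ (q+1) - (a - c) ^ (q+1)) / (q+1) := by
  rw [show (fun s => (s - c) ^ q) = fun s => ((fun x : ℝ => x ^ q) (s - c)) from rfl,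
    intervalIntegral.integral_comp_sub_right (fun x : ℝ => x ^ q) c,
    integral_rpow (Or.inl hq)]

lemma intInt_sub_rpow (p : ℝ) (hp : -1 < p) (c a b : ℝ) :
    IntervalIntegrable (fun s => (c - s) ^ p) volume a b := by
  have := (intervalIntegral.intervalIntegrable_rpow' (a := c - a) (b := c - b) (r := p) hp).comp_sub_left c
  simpa using this

lemma intInt_rpow_sub (q : ℝ) (hq : -1 < q) (c a b : ℝ) :
    IntervalIntegrable (fun s => (s - c) ^ q) volume a b := by
  have := (intervalIntegral.intervalIntegrable_rpow' (a := a - c) (b := b - c) (r := q) hq).comp_sub_right c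
  simpa using this



lemma beta_unit (α : ℝ) (hα0 : 0 < α) (hα1 : α < 1) :
    ∫ x in (0:ℝ)..1, x ^ (-α) * (1 - x) ^ (α - 1) = Real.Gamma (1 - α) * Real.Gamma α := by
  have h1 : (0:ℝ) < 1 - α := by linarith
  have key := Complex.Gamma_mul_Gamma_eq_betaIntegral
    (s := ((1 - α : ℝ) : ℂ)) (t := ((α : ℝ) : ℂ)) (by simpa using h1) (by simpa using hα0)
  have hsum : ((1 - α : ℝ) : ℂ) + ((α : ℝ) : ℂ) = 1 := by push_cast; ring
  rw [hsum, Complex.Gamma_one, one_mul] at key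
  have hβ : Complex.betaIntegral ((1 - α : ℝ) : ℂ) ((α : ℝ) : ℂ)
      = ((∫ x in (0:ℝ)..1, x ^ (-α) * (1 - x) ^ (α - 1) : ℝ) : ℂ) := by
    rw [Complex.betaIntegral, ← intervalIntegral.integral_ofReal]
    apply intervalIntegral.integral_congr
    intro x hx
    rw [uIcc_of_le (by norm_num : (0:ℝ) ≤ 1)] at hx
    have hx0 : (0:ℝ) ≤ x := hx.1
    have hx1 : (0:ℝ) ≤ 1 - x := by linarith [hx.2]
    have e1 : ((1 - α : ℝ) : ℂ) - 1 = ((-α : ℝ) : ℂ) := by push_cast; ring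
    have e2 : ((α : ℝ) : ℂ) - 1 = ((α - 1 : ℝ) : ℂ) := by push_cast; ring
    have e3 : (1 : ℂ) - (x : ℂ) = ((1 - x : ℝ) : ℂ) := by push_cast; ring
    show (x:ℂ) ^ (((1 - α : ℝ):ℂ) - 1) * (1 - (x:ℂ)) ^ (((α : ℝ):ℂ) - 1)
        = ((x ^ (-α) * (1 - x) ^ (α - 1) : ℝ) : ℂ)
    rw [e1, e3, e2, ← Complex.ofReal_cpow hx0, ← Complex.ofReal_cpow hx1,
      ← Complex.ofReal_mul]
  rw [hβ, Complex.Gamma_ofReal, Complex.Gamma_ofReal, ← Complex.ofReal_mul] at key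
  exact_mod_cast key.symm



lemma beta_interval (α : ℝ) (hα0 : 0 < α) (hα1 : α < 1) {s t : ℝ} (hst : s < t) :
    ∫ τ in s..t, (t - τ) ^ (α - 1) * (τ - s) ^ (-α)
      = Real.Gamma (1 - α) * Real.Gamma α := by
  set c := t - s with hc
  have hc0 : 0 < c := by simp [hc]; linarith
  have key := intervalIntegral.smul_integral_comp_mul_add
    (f := fun τ => (t - τ) ^ (α - 1) * (τ - s) ^ (-α)) (a := 0) (b := 1) c s
  have h1 : c * 0 + s = s := by ring
  have h2 : c * 1 + s = t := by rw [hc]; ring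
  rw [h1, h2] at key
  rw [← key]
  have congrh : ∀ x ∈ Icc (0:ℝ) 1,
      (t - (c * x + s)) ^ (α - 1) * ((c * x + s) - s) ^ (-α)
        = c⁻¹ * (x ^ (-α) * (1 - x) ^ (α - 1)) := by
    intro x hx
    have e1 : t - (c * x + s) = c * (1 - x) := by rw [hc]; ring
    have e2 : (c * x + s) - s = c * x := by ring
    rw [e1, e2, Real.mul_rpow hc0.le (by linarith [hx.2] : (0:ℝ) ≤ 1 - x),
      Real.mul_rpow hc0.le hx.1]
    have : c ^ (α - 1) * c ^ (-α) = c⁻¹ := by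
      rw [← Real.rpow_add hc0, show α - 1 + -α = -1 by ring, Real.rpow_neg_one]
    calc c ^ (α - 1) * (1 - x) ^ (α - 1) * (c ^ (-α) * x ^ (-α))
        = (c ^ (α - 1) * c ^ (-α)) * (x ^ (-α) * (1 - x) ^ (α - 1)) := by ring
      _ = c⁻¹ * (x ^ (-α) * (1 - x) ^ (α - 1)) := by rw [this]
  rw [intervalIntegral.integral_congr (g := fun x => c⁻¹ * (x ^ (-α) * (1 - x) ^ (α - 1)))
    (by rw [uIcc_of_le (by norm_num : (0:ℝ) ≤ 1)]; exact fun x hx => congrh x hx),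
    intervalIntegral.integral_const_mul, beta_unit α hα0 hα1, smul_eq_mul]
  field_simp




lemma measurable_rpow_const (r : ℝ) : Measurable fun x : ℝ => x ^ r := by
  have heq : (fun x : ℝ => x ^ r) = fun x =>
      if x = 0 then (if r = 0 then 1 else 0)
      else Real.exp (Real.log x * r) * (if x < 0 then Real.cos (r * Real.pi) else 1) := by
    funext x
    rcases lt_trichotomy x 0 with hx | hx | hx
    · rw [if_neg hx.ne, if_pos hx, Real.rpow_def_of_neg hx]
    · subst hx
      rcases eq_or_ne r 0 with hr | hr
      · simp [hr]
      · simp [Real.zero_rpow hr, hr]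
    · rw [if_neg hx.ne', if_neg (not_lt.mpr hx.le), mul_one, Real.rpow_def_of_pos hx]
  rw [heq]
  exact Measurable.ite (measurableSet_eq) measurable_const
    ((Real.measurable_exp.comp (Real.measurable_log.mul measurable_const)).mul
      (Measurable.ite measurableSet_Iio measurable_const measurable_const))

lemma fubini_kernel {E : Type*} [NormedAddCommGroup E] [NormedSpace ℝ E] [CompleteSpace E]
    (a t p q : ℝ) (hat : a < t) (hp : -1 < p) (hq : -1 < q)
    (φ : ℝ → E) (hφ : ContinuousOn φ (Icc a t)) :
    ∫ τ in a..t, ∫ s in a..τ, ((t - τ) ^ p * (τ - s) ^ q) • φ s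
      = ∫ s in a..t, (∫ τ in s..t, (t - τ) ^ p * (τ - s) ^ q) • φ s := by
  have hq1 : (0:ℝ) < q + 1 := by linarith
  set μ : Measure ℝ := volume.restrict (Ioc a t) with hμ
  set S : Set (ℝ × ℝ) := {z : ℝ × ℝ | z.2 ≤ z.1} with hS
  have hSmeas : MeasurableSet S := measurableSet_le measurable_snd measurable_fst
  set G : ℝ × ℝ → E := fun z => ((t - z.1) ^ p * (z.1 - z.2) ^ q) • φ z.2 with hG
  set ψ : ℝ × ℝ → E := S.indicator G with hψ
  obtain ⟨C, hC⟩ := isCompact_Icc.exists_bound_of_continuousOn hφ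
  have hC0 : 0 ≤ C := le_trans (norm_nonneg _) (hC a ⟨le_refl a, hat.le⟩)
  have hφm : AEStronglyMeasurable φ μ :=
    (hφ.aestronglyMeasurable measurableSet_Icc).mono_measure
      (Measure.restrict_mono Ioc_subset_Icc_self le_rfl)
  have hKm : Measurable fun z : ℝ × ℝ => (t - z.1) ^ p * (z.1 - z.2) ^ q :=
    ((measurable_rpow_const p).comp (measurable_const.sub measurable_fst)).mul
      ((measurable_rpow_const q).comp (measurable_fst.sub measurable_snd))
  have hGm : AEStronglyMeasurable G (μ.prod μ) :=
    hKm.aestronglyMeasurable.smul (hφm.comp_snd (μ := μ))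
  have hψm : AEStronglyMeasurable ψ (μ.prod μ) := hGm.indicator hSmeas
  have slice1 : ∀ τ : ℝ, (fun s => ψ (τ, s))
      = (Iic τ).indicator (fun s => ((t - τ) ^ p * (τ - s) ^ q) • φ s) := by
    intro τ; funext s
    simp only [hψ, hG, hS, Set.indicator_apply, Set.mem_setOf_eq, Set.mem_Iic]
  have slice2 : ∀ s : ℝ, (fun τ => ψ (τ, s))
      = (Ici s).indicator (fun τ => ((t - τ) ^ p * (τ - s) ^ q) • φ s) := by
    intro s; funext τ
    simp only [hψ, hG, hS, Set.indicator_apply, Set.mem_setOf_eq, Set.mem_Ici]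
  have hres : ∀ τ, τ ∈ Ioc a t → μ.restrict (Iic τ) = volume.restrict (Ioc a τ) := by
    intro τ hτ
    rw [hμ, Measure.restrict_restrict measurableSet_Iic]
    congr 1
    ext x; simp only [Set.mem_inter_iff, Set.mem_Iic, Set.mem_Ioc]
    constructor
    · rintro ⟨h1, h2, h3⟩; exact ⟨h2, h1⟩
    · rintro ⟨h1', h2'⟩; exact ⟨h2', h1', le_trans h2' hτ.2⟩
  -- integrability of the `s`-slices
  have inner_int : ∀ τ ∈ Ioc a t,
      IntegrableOn (fun s => ((t - τ) ^ p * (τ - s) ^ q) • φ s) (Ioc a τ) volume := by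
    intro τ hτ
    have hbint : IntegrableOn (fun s => ((t - τ) ^ p * C) * (τ - s) ^ q) (Ioc a τ) volume :=
      (((intInt_sub_rpow q hq τ a τ).def').mono_set
        (by rw [uIoc_of_le hτ.1.le])).const_mul _
    have haesm : AEStronglyMeasurable (fun s => ((t - τ) ^ p * (τ - s) ^ q) • φ s)
        (volume.restrict (Ioc a τ)) := by
      refine AEStronglyMeasurable.smul ?_ ?_
      · exact (measurable_const.mul
          ((measurable_rpow_const q).comp (measurable_const.sub measurable_id'))).aestronglyMeasurable
      · exact (hφ.aestronglyMeasurable measurableSet_Icc).mono_measure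
          (Measure.restrict_mono (Ioc_subset_Icc_self.trans
            (Icc_subset_Icc le_rfl hτ.2)) le_rfl)
    refine Integrable.mono' hbint haesm ?_
    filter_upwards [ae_restrict_mem measurableSet_Ioc] with s hs
    rw [norm_smul]
    have h1 : 0 ≤ (t - τ) ^ p := Real.rpow_nonneg (by linarith [hτ.2]) p
    have h2 : 0 ≤ (τ - s) ^ q := Real.rpow_nonneg (by linarith [hs.2]) q
    rw [Real.norm_of_nonneg (mul_nonneg h1 h2)]
    have : ‖φ s‖ ≤ C := hC s ⟨hs.1.le, le_trans hs.2 hτ.2⟩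
    calc (t - τ) ^ p * (τ - s) ^ q * ‖φ s‖ ≤ (t - τ) ^ p * (τ - s) ^ q * C := by
          exact mul_le_mul_of_nonneg_left this (mul_nonneg h1 h2)
      _ = ((t - τ) ^ p * C) * (τ - s) ^ q := by ring
  -- full integrability on the product
  have hInt : Integrable ψ (μ.prod μ) := by
    rw [integrable_prod_iff hψm]
    constructor
    · filter_upwards [ae_restrict_mem measurableSet_Ioc] with τ hτ
      rw [slice1 τ]
      rw [integrable_indicator_iff measurableSet_Iic]
      rw [IntegrableOn, hres τ hτ]
      exact inner_int τ hτ
    · refine Integrable.mono' (g := fun τ => (C * ((t-a) ^ (q+1)) / (q+1)) * (t - τ) ^ p)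
        ((((intInt_sub_rpow p hp t a t).def').mono_set
          (by rw [uIoc_of_le hat.le])).const_mul _) (hψm.norm.integral_prod_right') ?_
      filter_upwards [ae_restrict_mem measurableSet_Ioc] with τ hτ
      have hnn : 0 ≤ ∫ s, ‖ψ (τ, s)‖ ∂μ := integral_nonneg fun s => norm_nonneg _
      rw [Real.norm_of_nonneg hnn]
      have h1 : 0 ≤ (t - τ) ^ p := Real.rpow_nonneg (by linarith [hτ.2]) p
      have key : ∫ s, ‖ψ (τ, s)‖ ∂μ
          ≤ ∫ s in Ioc a τ, ((t - τ) ^ p * C) * (τ - s) ^ q := by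
        have : (fun s => ‖ψ (τ, s)‖)
            = (Iic τ).indicator (fun s => ‖((t - τ) ^ p * (τ - s) ^ q) • φ s‖) := by
          funext s
          rw [congrFun (slice1 τ) s]
          exact norm_indicator_eq_indicator_norm _ _
        rw [this, MeasureTheory.integral_indicator measurableSet_Iic, hμ,
          Measure.restrict_restrict measurableSet_Iic]
        have hII : Iic τ ∩ Ioc a t = Ioc a τ := by
          ext x; simp only [Set.mem_inter_iff, Set.mem_Iic, Set.mem_Ioc]
          constructor
          · rintro ⟨h1, h2, h3⟩; exact ⟨h2, h1⟩
          · rintro ⟨h1', h2'⟩; exact ⟨h2', h1', le_trans h2' hτ.2⟩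
        rw [hII]
        refine integral_mono_of_nonneg (Filter.Eventually.of_forall fun s => norm_nonneg _)
          ((((intInt_sub_rpow q hq τ a τ).def').mono_set
            (by rw [uIoc_of_le hτ.1.le])).const_mul _) ?_
        filter_upwards [ae_restrict_mem measurableSet_Ioc] with s hs
        rw [norm_smul]
        have h2 : 0 ≤ (τ - s) ^ q := Real.rpow_nonneg (by linarith [hs.2]) q
        rw [Real.norm_of_nonneg (mul_nonneg h1 h2)]
        calc (t - τ) ^ p * (τ - s) ^ q * ‖φ s‖
            ≤ (t - τ) ^ p * (τ - s) ^ q * C :=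
              mul_le_mul_of_nonneg_left (hC s ⟨hs.1.le, le_trans hs.2 hτ.2⟩)
                (mul_nonneg h1 h2)
          _ = ((t - τ) ^ p * C) * (τ - s) ^ q := by ring
      refine key.trans ?_
      have hval : ∫ s in Ioc a τ, ((t - τ) ^ p * C) * (τ - s) ^ q
          = ((t - τ) ^ p * C) * ((τ - a) ^ (q+1) / (q+1)) := by
        rw [MeasureTheory.integral_const_mul, ← intervalIntegral.integral_of_le hτ.1.le,
          int_sub_rpow q hq τ a τ, sub_self, Real.zero_rpow (by linarith : q + 1 ≠ 0),
          sub_zero]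
      rw [hval]
      have hmono : (τ - a) ^ (q+1) ≤ (t - a) ^ (q+1) :=
        Real.rpow_le_rpow (by linarith [hτ.1]) (by linarith [hτ.2]) hq1.le
      calc (t - τ) ^ p * C * ((τ - a) ^ (q+1) / (q+1))
          ≤ (t - τ) ^ p * C * ((t - a) ^ (q+1) / (q+1)) := by
            refine mul_le_mul_of_nonneg_left ?_ (mul_nonneg h1 hC0)
            gcongr
        _ = (C * ((t-a) ^ (q+1)) / (q+1)) * (t - τ) ^ p := by ring
  -- Fubini
  have swap := MeasureTheory.integral_integral_swap (f := fun τ s => ψ (τ, s)) (by exact hInt)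
  -- identify LHS
  have lhs_eq : ∫ τ, (∫ s, ψ (τ, s) ∂μ) ∂μ
      = ∫ τ in a..t, ∫ s in a..τ, ((t - τ) ^ p * (τ - s) ^ q) • φ s := by
    rw [intervalIntegral.integral_of_le hat.le]
    refine setIntegral_congr_ae measurableSet_Ioc ?_
    filter_upwards [] with τ hτ
    have hII : Iic τ ∩ Ioc a t = Ioc a τ := by
      ext x; simp only [Set.mem_inter_iff, Set.mem_Iic, Set.mem_Ioc]
      constructor
      · rintro ⟨h1, h2, h3⟩; exact ⟨h2, h1⟩
      · rintro ⟨h1', h2'⟩; exact ⟨h2', h1', le_trans h2' hτ.2⟩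
    rw [slice1 τ, MeasureTheory.integral_indicator measurableSet_Iic, hμ,
      Measure.restrict_restrict measurableSet_Iic, hII,
      intervalIntegral.integral_of_le hτ.1.le]
  -- identify RHS
  have rhs_eq : ∫ s, (∫ τ, ψ (τ, s) ∂μ) ∂μ
      = ∫ s in a..t, (∫ τ in s..t, (t - τ) ^ p * (τ - s) ^ q) • φ s := by
    rw [intervalIntegral.integral_of_le hat.le]
    refine setIntegral_congr_ae measurableSet_Ioc ?_
    filter_upwards [] with s hs
    rw [slice2 s, MeasureTheory.integral_indicator measurableSet_Ici, hμ,
      Measure.restrict_restrict measurableSet_Ici]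
    have hIci : Ici s ∩ Ioc a t = Icc s t := by
      ext x; simp only [Set.mem_inter_iff, Set.mem_Ici, Set.mem_Ioc, Set.mem_Icc]
      constructor
      · rintro ⟨h1, h2, h3⟩; exact ⟨h1, h3⟩
      · rintro ⟨h1', h2'⟩; exact ⟨h1', lt_of_lt_of_le hs.1 h1', h2'⟩
    rw [hIci, integral_Icc_eq_integral_Ioc, ← intervalIntegral.integral_of_le hs.2,
      intervalIntegral.integral_smul_const]
  rw [← lhs_eq, ← rhs_eq]
  exact swap



lemma rpow_add_le (x y p : ℝ) (hx : 0 ≤ x) (hy : 0 ≤ y) (hp : 0 ≤ p) (hp1 : p ≤ 1) :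
    (x + y) ^ p ≤ x ^ p + y ^ p := by
  have h := NNReal.rpow_add_le_add_rpow x.toNNReal y.toNNReal hp hp1
  rw [← Real.coe_toNNReal x hx, ← Real.coe_toNNReal y hy, ← NNReal.coe_add,
    ← NNReal.coe_rpow, ← NNReal.coe_rpow, ← NNReal.coe_rpow, ← NNReal.coe_add, NNReal.coe_le_coe]
  exact h

lemma intInt_ker_smul {E : Type*} [NormedAddCommGroup E] [NormedSpace ℝ E]
    (p : ℝ) (hp : -1 < p) (c : ℝ) {a b t₁ t₂ : ℝ} (h12 : t₁ ≤ t₂)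
    (hsub : Ioc t₁ t₂ ⊆ Icc a b) {F : ℝ → E} (hF : ContinuousOn F (Icc a b)) :
    IntervalIntegrable (fun s => (c - s) ^ p • F s) volume t₁ t₂ := by
  obtain ⟨C, hC⟩ := isCompact_Icc.exists_bound_of_continuousOn hF
  rw [intervalIntegrable_iff, uIoc_of_le h12]
  have hb : IntegrableOn (fun s => |(c - s) ^ p| * C) (Ioc t₁ t₂) volume :=
    (((intInt_sub_rpow p hp c t₁ t₂).norm.def').mono_set (by rw [uIoc_of_le h12])).mul_const C
  refine Integrable.mono' hb ?_ ?_
  · exact (((measurable_rpow_const p).comp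
        (measurable_const.sub measurable_id')).aestronglyMeasurable).smul
      ((hF.aestronglyMeasurable measurableSet_Icc).mono_measure
        (Measure.restrict_mono hsub le_rfl))
  · filter_upwards [ae_restrict_mem measurableSet_Ioc] with s hs
    rw [norm_smul, Real.norm_eq_abs]
    exact mul_le_mul_of_nonneg_left (hC s (hsub hs)) (abs_nonneg _)

lemma eq_zero_of_integral_zero {E : Type*} [NormedAddCommGroup E] [NormedSpace ℝ E]
    [CompleteSpace E] {a b : ℝ} (hab : a < b) {ψ : ℝ → E} (hψ : ContinuousOn ψ (Icc a b))
    (h : ∀ t ∈ Icc a b, (∫ s in a..t, ψ s) = 0) :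
    ∀ t ∈ Icc a b, ψ t = 0 := by
  set Ψ : ℝ → E := Set.IccExtend hab.le (fun x : Icc a b => ψ x) with hΨ
  have hΨc : Continuous Ψ := by
    rw [hΨ, continuous_IccExtend_iff]
    exact continuousOn_iff_continuous_restrict.mp hψ
  have hΨeq : ∀ x ∈ Icc a b, Ψ x = ψ x := fun x hx => Set.IccExtend_of_mem _ _ hx
  have hint0 : ∀ t ∈ Icc a b, (∫ s in a..t, Ψ s) = 0 := by
    intro t ht
    rw [intervalIntegral.integral_congr (g := ψ)
      (fun x hx => hΨeq x ((uIcc_subset_Icc ⟨le_refl a, hab.le⟩ ht) hx))]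
    exact h t ht
  intro t ht
  have hd : HasDerivWithinAt (fun x => ∫ s in a..x, Ψ s) (Ψ t) (Icc a b) t :=
    (intervalIntegral.integral_hasDerivAt_right (hΨc.intervalIntegrable a t)
      (hΨc.stronglyMeasurable.stronglyMeasurableAtFilter)
      hΨc.continuousAt).hasDerivWithinAt
  have hzero : HasDerivWithinAt (fun _ : ℝ => (0:E)) (Ψ t) (Icc a b) t :=
    hd.congr (fun y hy => (hint0 y hy).symm) (hint0 t ht).symm
  have huniq := UniqueDiffWithinAt.eq_deriv _ ((uniqueDiffOn_Icc hab) t ht)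
    hzero (hasDerivWithinAt_const t _ (0:E))
  rw [← hΨeq t ht, huniq]

lemma cont_conv {E : Type*} [NormedAddCommGroup E] [NormedSpace ℝ E] [CompleteSpace E]
    {a b : ℝ} (hab : a < b) (α : ℝ) (hα0 : 0 < α) (hα1 : α < 1)
    {F : ℝ → E} (hF : ContinuousOn F (Icc a b)) :
    ContinuousOn (fun t => ∫ s in a..t, (t - s) ^ (α - 1) • F s) (Icc a b) := by
  obtain ⟨C, hC⟩ := isCompact_Icc.exists_bound_of_continuousOn hF
  have hC0 : 0 ≤ C := le_trans (norm_nonneg _) (hC a ⟨le_refl a, hab.le⟩)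
  have hα1' : -1 < α - 1 := by linarith
  set h : ℝ → E := fun t => ∫ s in a..t, (t - s) ^ (α - 1) • F s with hh
  have key : ∀ t ∈ Icc a b, ∀ t' ∈ Icc a b, t ≤ t' →
      ‖h t' - h t‖ ≤ 2 * C / α * (t' - t) ^ α := by
    intro t ht t' ht' htt'
    have i1 : IntervalIntegrable (fun s => (t' - s) ^ (α-1) • F s) volume a t :=
      intInt_ker_smul _ hα1' t' ht.1 (fun x hx => ⟨hx.1.le, le_trans hx.2 ht.2⟩) hF
    have i2 : IntervalIntegrable (fun s => (t' - s) ^ (α-1) • F s) volume t t' :=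
      intInt_ker_smul _ hα1' t' htt' (fun x hx => ⟨le_trans ht.1 hx.1.le, le_trans hx.2 ht'.2⟩) hF
    have i3 : IntervalIntegrable (fun s => (t - s) ^ (α-1) • F s) volume a t :=
      intInt_ker_smul _ hα1' t ht.1 (fun x hx => ⟨hx.1.le, le_trans hx.2 ht.2⟩) hF
    have hsplit : h t' - h t = (∫ s in a..t, ((t' - s) ^ (α-1) - (t - s) ^ (α-1)) • F s)
        + ∫ s in t..t', (t' - s) ^ (α-1) • F s := by
      have e1 : h t' = (∫ s in a..t, (t' - s) ^ (α-1) • F s)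
          + ∫ s in t..t', (t' - s) ^ (α-1) • F s :=
        (intervalIntegral.integral_add_adjacent_intervals i1 i2).symm
      have e2 : ∫ s in a..t, ((t' - s) ^ (α-1) - (t - s) ^ (α-1)) • F s
          = (∫ s in a..t, (t' - s) ^ (α-1) • F s) - ∫ s in a..t, (t - s) ^ (α-1) • F s := by
        rw [← intervalIntegral.integral_sub i1 i3]
        congr 1; funext s; rw [sub_smul]
      rw [e1, e2]
      abel
    rw [hsplit]
    have hexp : α - 1 + 1 = α := by ring
    have bound2 : ‖∫ s in t..t', (t' - s) ^ (α-1) • F s‖ ≤ C / α * (t' - t) ^ α := by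
      have hintg : IntervalIntegrable (fun s => C * (t' - s) ^ (α-1)) volume t t' :=
        (intInt_sub_rpow _ hα1' t' t t').const_mul C
      refine (intervalIntegral.norm_integral_le_abs_of_norm_le ?_ hintg).trans ?_
      · filter_upwards [ae_restrict_mem measurableSet_uIoc] with s hs
        rw [uIoc_of_le htt'] at hs
        rw [norm_smul, Real.norm_eq_abs]
        have h1 : 0 ≤ (t' - s) ^ (α-1) := Real.rpow_nonneg (by linarith [hs.2]) _
        rw [abs_of_nonneg h1]
        calc (t' - s) ^ (α-1) * ‖F s‖ ≤ (t' - s) ^ (α-1) * C :=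
              mul_le_mul_of_nonneg_left
                (hC s ⟨le_trans ht.1 hs.1.le, le_trans hs.2 ht'.2⟩) h1
          _ = C * (t' - s) ^ (α-1) := mul_comm _ _
      · rw [intervalIntegral.integral_const_mul, int_sub_rpow _ hα1' t' t t', hexp,
          sub_self, Real.zero_rpow hα0.ne', sub_zero]
        have hZ0 : 0 ≤ (t' - t) ^ α := Real.rpow_nonneg (by linarith) _
        rw [abs_of_nonneg (mul_nonneg hC0 (div_nonneg hZ0 hα0.le))]
        exact le_of_eq (by ring)
    have bound1 : ‖∫ s in a..t, ((t' - s) ^ (α-1) - (t - s) ^ (α-1)) • F s‖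
        ≤ C / α * (t' - t) ^ α := by
      have hg : IntervalIntegrable (fun s => C * ((t - s) ^ (α-1) - (t' - s) ^ (α-1))) volume a t :=
        ((intInt_sub_rpow _ hα1' t a t).sub (intInt_sub_rpow _ hα1' t' a t)).const_mul C
      refine (intervalIntegral.norm_integral_le_abs_of_norm_le ?_ hg).trans ?_
      · have hne : ∀ᵐ s : ℝ, s ≠ t := by
          have hset : {x : ℝ | ¬ x ≠ t} = {t} := by ext x; simp
          rw [ae_iff, hset]
          exact Real.volume_singleton
        filter_upwards [ae_restrict_mem measurableSet_uIoc, ae_restrict_of_ae hne]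
          with s hs hneq
        rw [uIoc_of_le ht.1] at hs
        have hst : s < t := lt_of_le_of_ne hs.2 hneq
        rw [norm_smul, Real.norm_eq_abs]
        have h1 : (t' - s) ^ (α-1) ≤ (t - s) ^ (α-1) :=
          Real.rpow_le_rpow_of_nonpos (by linarith) (by linarith) (by linarith)
        have h2 : 0 ≤ (t' - s) ^ (α-1) := Real.rpow_nonneg (by linarith) _
        have habs : |(t' - s) ^ (α-1) - (t - s) ^ (α-1)|
            = (t - s) ^ (α-1) - (t' - s) ^ (α-1) := by
          rw [abs_of_nonpos (by linarith), neg_sub]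
        rw [habs]
        calc ((t - s) ^ (α-1) - (t' - s) ^ (α-1)) * ‖F s‖
            ≤ ((t - s) ^ (α-1) - (t' - s) ^ (α-1)) * C :=
              mul_le_mul_of_nonneg_left (hC s ⟨hs.1.le, le_trans hs.2 ht.2⟩) (by linarith)
          _ = C * ((t - s) ^ (α-1) - (t' - s) ^ (α-1)) := mul_comm _ _
      · rw [intervalIntegral.integral_const_mul,
          intervalIntegral.integral_sub (intInt_sub_rpow _ hα1' t a t)
            (intInt_sub_rpow _ hα1' t' a t),
          int_sub_rpow _ hα1' t a t, int_sub_rpow _ hα1' t' a t, hexp,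
          sub_self, Real.zero_rpow hα0.ne', sub_zero]
        have hXY : (t - a) ^ α ≤ (t' - a) ^ α :=
          Real.rpow_le_rpow (by linarith [ht.1]) (by linarith) hα0.le
        have hsub2 : (t' - a) ^ α ≤ (t - a) ^ α + (t' - t) ^ α := by
          have hs := rpow_add_le (t - a) (t' - t) α (by linarith [ht.1]) (by linarith)
            hα0.le hα1.le
          have e : t' - a = (t - a) + (t' - t) := by ring
          rw [e]
          exact hs
        have hZ0 : 0 ≤ (t' - t) ^ α := Real.rpow_nonneg (by linarith) _
        have heq : C * ((t - a) ^ α / α - ((t' - a) ^ α - (t' - t) ^ α) / α)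
            = C * ((t - a) ^ α - (t' - a) ^ α + (t' - t) ^ α) / α := by ring
        rw [heq, abs_of_nonneg (by
          apply div_nonneg _ hα0.le
          apply mul_nonneg hC0
          linarith)]
        calc C * ((t - a) ^ α - (t' - a) ^ α + (t' - t) ^ α) / α
            ≤ C * (t' - t) ^ α / α := by
              exact (div_le_div_iff_of_pos_right hα0).mpr (by nlinarith)
          _ = C / α * (t' - t) ^ α := by ring
    calc ‖(∫ s in a..t, ((t' - s) ^ (α-1) - (t - s) ^ (α-1)) • F s)
        + ∫ s in t..t', (t' - s) ^ (α-1) • F s‖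
        ≤ ‖∫ s in a..t, ((t' - s) ^ (α-1) - (t - s) ^ (α-1)) • F s‖
          + ‖∫ s in t..t', (t' - s) ^ (α-1) • F s‖ := norm_add_le _ _
      _ ≤ C / α * (t' - t) ^ α + C / α * (t' - t) ^ α := add_le_add bound1 bound2
      _ = 2 * C / α * (t' - t) ^ α := by ring
  intro t ht
  have symm_key : ∀ t' ∈ Icc a b, ‖h t' - h t‖ ≤ 2 * C / α * |t' - t| ^ α := by
    intro t' ht'
    rcases le_total t t' with hle | hle
    · rw [abs_of_nonneg (by linarith)]; exact key t ht t' ht' hle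
    · rw [abs_of_nonpos (by linarith), neg_sub, norm_sub_rev]
      exact key t' ht' t ht hle
  have htend : Tendsto (fun t' => h t' - h t) (nhdsWithin t (Icc a b)) (nhds 0) := by
    refine squeeze_zero_norm' (a := fun t' : ℝ => 2 * C / α * |t' - t| ^ α) ?_ ?_
    · filter_upwards [eventually_mem_nhdsWithin] with t' ht' using symm_key t' ht'
    · have hcont : Continuous fun t' : ℝ => 2 * C / α * |t' - t| ^ α :=
        continuous_const.mul (((continuous_id.sub continuous_const).abs).rpow_const
          (fun x => Or.inr hα0.le))
      have h0 := hcont.tendsto t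
      simp only [sub_self, abs_zero, Real.zero_rpow hα0.ne', mul_zero] at h0
      exact h0.mono_left nhdsWithin_le_nhds
  have : Tendsto h (nhdsWithin t (Icc a b)) (nhds (h t)) := by
    have h2 := htend.add (tendsto_const_nhds (x := h t) (f := nhdsWithin t (Icc a b)))
    simp only [sub_add_cancel, zero_add] at h2
    exact h2
  exact this

/-- If `f : [a,b] × E → E` is continuous, `u : [a,b] → E` is continuous with
`u(a) = u₀`, and for every `t ∈ [a,b]` the Caputo derivative `(ᶜDᵅₐ u)(t)` (i.e. the strong
derivative at `t` of `τ ↦ (1/Γ(1-α)) ∫_a^τ (τ-s)^{-α} (u(s) - u(a)) ds`) exists and equals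
`f(t, u(t))`, then `u` satisfies the Volterra integral equation
`u(t) = u₀ + (1/Γ(α)) ∫_a^t (t-s)^{α-1} f(s, u(s)) ds` on `[a,b]`. -/
theorem caputo_ivp_implies_volterra
    {E : Type*} [NormedAddCommGroup E] [NormedSpace ℝ E] [CompleteSpace E]
    (a b α : ℝ) (hab : a < b) (hα0 : 0 < α) (hα1 : α < 1)
    (f : ℝ → E → E)
    (hf : ContinuousOn (fun p : ℝ × E => f p.1 p.2) (Set.Icc a b ×ˢ Set.univ))
    (u₀ : E) (u : ℝ → E)
    (hu : ContinuousOn u (Set.Icc a b)) (hua : u a = u₀)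
    (hD : ∀ t ∈ Set.Icc a b,
      HasDerivWithinAt
        (fun τ => (Real.Gamma (1 - α))⁻¹ • ∫ s in a..τ, ((τ - s) ^ (-α) : ℝ) • (u s - u a))
        (f t (u t)) (Set.Icc a b) t) :
    ∀ t ∈ Set.Icc a b,
      u t = u₀ + (Real.Gamma α)⁻¹ • ∫ s in a..t, ((t - s) ^ (α - 1) : ℝ) • f s (u s) := by
  have hα1' : -1 < α - 1 := by linarith
  have hαn : -1 < -α := by linarith
  have hexp : α - 1 + 1 = α := by ring
  have hΓ1α : 0 < Real.Gamma (1 - α) := Real.Gamma_pos_of_pos (by linarith)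
  have hΓα : 0 < Real.Gamma α := Real.Gamma_pos_of_pos hα0
  have hF : ContinuousOn (fun s => f s (u s)) (Icc a b) :=
    hf.comp (f := fun s => (s, u s)) (continuousOn_id.prodMk hu) (fun x hx => ⟨hx, mem_univ _⟩)
  have hv : ContinuousOn (fun s => u s - u₀) (Icc a b) := hu.sub continuousOn_const
  -- Step 1 : FTC
  have step1 : ∀ τ ∈ Icc a b, (∫ s in a..τ, f s (u s))
      = (Real.Gamma (1 - α))⁻¹ • ∫ s in a..τ, ((τ - s) ^ (-α) : ℝ) • (u s - u a) := by
    intro τ hτ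
    have hgcont : ContinuousOn
        (fun τ => (Real.Gamma (1 - α))⁻¹ • ∫ s in a..τ, ((τ - s) ^ (-α) : ℝ) • (u s - u a))
        (Icc a b) := fun x hx => (hD x hx).continuousWithinAt
    have hFi : ContinuousOn (fun s => f s (u s)) (uIcc a τ) := by
      rw [uIcc_of_le hτ.1]; exact hF.mono (Icc_subset_Icc le_rfl hτ.2)
    have key := intervalIntegral.integral_eq_sub_of_hasDeriv_right_of_le hτ.1
      (hgcont.mono (Icc_subset_Icc le_rfl hτ.2))
      (fun x hx => ((hD x ⟨hx.1.le, le_trans hx.2.le hτ.2⟩).hasDerivAt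
        (Icc_mem_nhds hx.1 (lt_of_lt_of_le hx.2 hτ.2))).hasDerivWithinAt)
      hFi.intervalIntegrable
    rw [key]
    simp
  -- X-form of step 1
  have step1' : ∀ τ ∈ Icc a b, (∫ s in a..τ, ((τ - s) ^ (-α) : ℝ) • (u s - u₀))
      = Real.Gamma (1 - α) • ∫ s in a..τ, f s (u s) := by
    intro τ hτ
    rw [step1 τ hτ, smul_inv_smul₀ hΓ1α.ne', hua]
  -- the claim : Γ(α) • ∫ v = ∫ h₀
  have claim : ∀ T ∈ Icc a b, Real.Gamma α • (∫ s in a..T, (u s - u₀))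
      = ∫ τ in a..T, (∫ s in a..τ, ((τ - s) ^ (α - 1) : ℝ) • f s (u s)) := by
    intro T hT
    rcases eq_or_lt_of_le hT.1 with haT | haT
    · rw [← haT]; simp
    have hFT : ContinuousOn (fun s => f s (u s)) (Icc a T) :=
      hF.mono (Icc_subset_Icc le_rfl hT.2)
    have hvT : ContinuousOn (fun s => u s - u₀) (Icc a T) :=
      hv.mono (Icc_subset_Icc le_rfl hT.2)
    -- middle value
    have fub1 := fubini_kernel a T (α - 1) (-α) haT hα1' hαn _ hvT
    have fub2 := fubini_kernel a T (α - 1) 0 haT hα1' (by norm_num) _ hFT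
    have fub3 := fubini_kernel a T 0 (α - 1) haT (by norm_num) hα1' _ hFT
    -- E5 / E3 : elementary inner integrals
    have E3 : ∀ s, (∫ τ in s..T, ((T - τ) ^ (α-1) : ℝ) * ((τ - s) ^ (0:ℝ)))
        = (T - s) ^ α / α := by
      intro s
      simp only [Real.rpow_zero, mul_one]
      rw [int_sub_rpow (α-1) hα1' T s T, hexp, sub_self, Real.zero_rpow hα0.ne', sub_zero]
    have E5 : ∀ s, (∫ τ in s..T, ((T - τ) ^ (0:ℝ) : ℝ) * ((τ - s) ^ (α-1)))
        = (T - s) ^ α / α := by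
      intro s
      simp only [Real.rpow_zero, one_mul]
      rw [int_rpow_sub (α-1) hα1' s s T, hexp, sub_self, Real.zero_rpow hα0.ne', sub_zero]
    -- chain for M
    have chainM : (∫ τ in a..T, (∫ s in a..τ, ((τ - s) ^ (α - 1) : ℝ) • f s (u s)))
        = ∫ s in a..T, ((T - s) ^ α / α) • f s (u s) := by
      have e1 : (∫ τ in a..T, (∫ s in a..τ, ((τ - s) ^ (α - 1) : ℝ) • f s (u s)))
          = ∫ τ in a..T, (∫ s in a..τ, (((T - τ) ^ (0:ℝ)) * ((τ - s) ^ (α - 1)) : ℝ) • f s (u s)) := by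
        simp only [Real.rpow_zero, one_mul]
      rw [e1, fub3]
      apply intervalIntegral.integral_congr
      intro s hs
      beta_reduce
      rw [E5 s]
    -- chain for L₂
    have chainL2 : (∫ τ in a..T, ((T - τ) ^ (α-1) : ℝ) • (∫ s in a..τ, f s (u s)))
        = ∫ s in a..T, ((T - s) ^ α / α) • f s (u s) := by
      have e1 : (∫ τ in a..T, ((T - τ) ^ (α-1) : ℝ) • (∫ s in a..τ, f s (u s)))
          = ∫ τ in a..T, (∫ s in a..τ, (((T - τ) ^ (α-1)) * ((τ - s) ^ (0:ℝ)) : ℝ) • f s (u s)) := by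
        apply intervalIntegral.integral_congr
        intro τ hτ
        simp only [Real.rpow_zero, mul_one]
        rw [intervalIntegral.integral_smul]
      rw [e1, fub2]
      apply intervalIntegral.integral_congr
      intro s hs
      beta_reduce
      rw [E3 s]
    -- chain for L
    have chainL : ((Real.Gamma (1-α) * Real.Gamma α) • (∫ s in a..T, (u s - u₀)))
        = Real.Gamma (1-α) • ∫ τ in a..T, ((T - τ) ^ (α-1) : ℝ) • (∫ s in a..τ, f s (u s)) := by
      have e1 : ((Real.Gamma (1-α) * Real.Gamma α) • (∫ s in a..T, (u s - u₀)))
          = ∫ s in a..T, (Real.Gamma (1-α) * Real.Gamma α) • (u s - u₀) := by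
        rw [intervalIntegral.integral_smul]
      have e2 : (∫ s in a..T, (Real.Gamma (1-α) * Real.Gamma α) • (u s - u₀))
          = ∫ s in a..T, (∫ τ in s..T, ((T - τ) ^ (α-1) : ℝ) * ((τ - s) ^ (-α))) • (u s - u₀) := by
        apply intervalIntegral.integral_congr_ae
        have hne : ∀ᵐ s : ℝ, s ≠ T := by
          have hset : {x : ℝ | ¬ x ≠ T} = {T} := by ext x; simp
          rw [ae_iff, hset]; exact Real.volume_singleton
        filter_upwards [hne] with s hsne hs
        rw [uIoc_of_le haT.le] at hs
        rw [beta_interval α hα0 hα1 (lt_of_le_of_ne hs.2 hsne)]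
      have e3 : (∫ τ in a..T, (∫ s in a..τ, (((T - τ) ^ (α-1)) * ((τ - s) ^ (-α)) : ℝ) • (u s - u₀)))
          = ∫ τ in a..T, Real.Gamma (1-α) • (((T - τ) ^ (α-1) : ℝ) • (∫ s in a..τ, f s (u s))) := by
        apply intervalIntegral.integral_congr
        intro τ hτ
        rw [uIcc_of_le haT.le] at hτ
        beta_reduce
        have : (fun s => (((T - τ) ^ (α-1)) * ((τ - s) ^ (-α)) : ℝ) • (u s - u₀))
            = fun s => ((T - τ) ^ (α-1) : ℝ) • (((τ - s) ^ (-α) : ℝ) • (u s - u₀)) := by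
          funext s; rw [mul_smul]
        rw [this, intervalIntegral.integral_smul,
          step1' τ ⟨hτ.1, le_trans hτ.2 hT.2⟩, smul_comm]
      rw [e1, e2, ← fub1, e3, intervalIntegral.integral_smul]
    -- combine
    have final : Real.Gamma (1-α) • (Real.Gamma α • (∫ s in a..T, (u s - u₀)))
        = Real.Gamma (1-α) • (∫ τ in a..T, (∫ s in a..τ, ((τ - s) ^ (α - 1) : ℝ) • f s (u s))) := by
      rw [smul_smul]
      rw [chainL]
      rw [chainL2]
      rw [chainM]
    exact smul_right_injective E hΓ1α.ne' final
  -- uniqueness step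
  have hψc : ContinuousOn
      (fun x => Real.Gamma α • (u x - u₀) - ∫ s in a..x, ((x - s) ^ (α - 1) : ℝ) • f s (u s))
      (Icc a b) := (continuousOn_const.smul hv).sub (cont_conv hab α hα0 hα1 hF)
  have hzero : ∀ T ∈ Icc a b,
      (∫ x in a..T, (Real.Gamma α • (u x - u₀)
        - ∫ s in a..x, ((x - s) ^ (α - 1) : ℝ) • f s (u s))) = 0 := by
    intro T hT
    have i1 : IntervalIntegrable (fun x => Real.Gamma α • (u x - u₀)) volume a T := by
      apply ContinuousOn.intervalIntegrable
      rw [uIcc_of_le hT.1]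
      exact (continuousOn_const.smul hv).mono (Icc_subset_Icc le_rfl hT.2)
    have i2 : IntervalIntegrable
        (fun x => ∫ s in a..x, ((x - s) ^ (α - 1) : ℝ) • f s (u s)) volume a T := by
      apply ContinuousOn.intervalIntegrable
      rw [uIcc_of_le hT.1]
      exact (cont_conv hab α hα0 hα1 hF).mono (Icc_subset_Icc le_rfl hT.2)
    rw [intervalIntegral.integral_sub i1 i2, intervalIntegral.integral_smul,
      claim T hT, sub_self]
  intro t ht
  have := eq_zero_of_integral_zero hab hψc hzero t ht
  have hvt : Real.Gamma α • (u t - u₀) = ∫ s in a..t, ((t - s) ^ (α - 1) : ℝ) • f s (u s) :=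
    sub_eq_zero.mp this
  have : u t - u₀ = (Real.Gamma α)⁻¹ • ∫ s in a..t, ((t - s) ^ (α - 1) : ℝ) • f s (u s) := by
    rw [← hvt, inv_smul_smul₀ hΓα.ne']
  exact sub_eq_iff_eq_add'.mp this
end

section
/- Let f : [a,b] × E → E be continuous, u₀ ∈ E, and let u : [a,b] → E be continuous and satisfy the Volterra integral equation u(t) = u₀ + (1/Γ(α)) ∫_a^t (t-s)^{α-1} f(s, u(s)) ds for every t ∈ [a,b]. Then u(a) = u₀, and for every t ∈ [a,b] the Caputo fractional derivative (ᶜD^α_a u)(t) exists, equals f(t, u(t)), and the map t ↦ (ᶜD^α_a u)(t) is continuous on [a,b]. -/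
/-!
Put `g s = f s (u s)` and let `I^p` be the Riemann–Liouville integral from `a`. Subtracting the
Volterra equation at `a` from the one at `s` gives `u s - u a = I^α g s`. Exchanging the order of
integration over the triangle `a < r < s ≤ τ` and evaluating the inner integral as a Beta integral
gives the semigroup law `I^(1-α) (I^α g) = I^1 g = ∫_a^τ g`, so the Caputo derivative of `u` is
the derivative of `τ ↦ ∫_a^τ g`, which is `g` by the fundamental theorem of calculus.
-/

open MeasureTheory Set intervalIntegral Function

theorem integral_rpow_mul_sub_rpow {p q c : ℝ} (hp : 0 < p) (hq : 0 < q) (hc : 0 < c) :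
    ∫ x in 0..c, x ^ (p - 1) * (c - x) ^ (q - 1) =
      Real.Gamma p * Real.Gamma q / Real.Gamma (p + q) * c ^ (p + q - 1) := by
  apply Complex.ofReal_injective
  have h := Complex.betaIntegral_scaled p q hc
  rw [Complex.betaIntegral_eq_Gamma_mul_div _ _ (by simpa) (by simpa)] at h
  rw [← intervalIntegral.integral_ofReal]
  push_cast [Complex.ofReal_cpow hc.le, ← Complex.Gamma_ofReal]
  rw [mul_comm, ← h]
  refine intervalIntegral.integral_congr fun x hx => ?_
  rw [uIcc_of_le hc.le] at hx
  simp only [Complex.ofReal_cpow hx.1, Complex.ofReal_cpow (sub_nonneg.2 hx.2)]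
  push_cast
  ring

theorem integral_sub_rpow_mul_rpow_sub {p q r τ : ℝ} (hp : 0 < p) (hq : 0 < q) (h : r < τ) :
    ∫ s in r..τ, (τ - s) ^ (q - 1) * (s - r) ^ (p - 1) =
      Real.Gamma p * Real.Gamma q / Real.Gamma (p + q) * (τ - r) ^ (p + q - 1) := by
  have hshift := intervalIntegral.integral_comp_sub_right
    (fun x => x ^ (p - 1) * (τ - r - x) ^ (q - 1)) r (a := r) (b := τ)
  rw [← integral_rpow_mul_sub_rpow hp hq (sub_pos.2 h), ← sub_self r, ← hshift]
  simp only [sub_sub_sub_cancel_right, mul_comm]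

section

variable {E : Type*} [NormedAddCommGroup E] [NormedSpace ℝ E]

def triangle (a b : ℝ) : Set (ℝ × ℝ) := {z | a < z.2 ∧ z.2 < z.1 ∧ z.1 ≤ b}

theorem measurableSet_triangle (a b : ℝ) : MeasurableSet (triangle a b) :=
  (measurableSet_lt measurable_const measurable_snd).inter
    ((measurableSet_lt measurable_snd measurable_fst).inter
      (measurableSet_le measurable_fst measurable_const))

theorem indicator_triangle_eq_row {M : Type*} [Zero M] (a b : ℝ) (F : ℝ → ℝ → M) (s r : ℝ) :
    (triangle a b).indicator (uncurry F) (s, r) =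
      (Ioc a b).indicator (fun s => (Ioo a s).indicator (F s) r) s := by
  simp only [triangle, indicator_apply, uncurry_apply_pair]
  grind

theorem indicator_triangle_eq_col {M : Type*} [Zero M] (a b : ℝ) (F : ℝ → ℝ → M) (s r : ℝ) :
    (triangle a b).indicator (uncurry F) (s, r) =
      (Ioo a b).indicator (fun r => (Ioc r b).indicator (fun s => F s r) s) r := by
  simp only [triangle, indicator_apply, uncurry_apply_pair]
  grind

theorem integral_indicator_triangle_row (a b : ℝ) (F : ℝ → ℝ → E) (s : ℝ) :
    ∫ r, (triangle a b).indicator (uncurry F) (s, r) =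
      (Ioc a b).indicator (fun s => ∫ r in a..s, F s r) s := by
  simp_rw [indicator_triangle_eq_row]
  by_cases hs : s ∈ Ioc a b
  · simp only [indicator_of_mem hs]
    rw [MeasureTheory.integral_indicator measurableSet_Ioo, integral_of_le hs.1.le,
      integral_Ioc_eq_integral_Ioo]
  · simp [indicator_of_notMem hs]

theorem integral_indicator_triangle_col (a b : ℝ) (F : ℝ → ℝ → E) (r : ℝ) :
    ∫ s, (triangle a b).indicator (uncurry F) (s, r) =
      (Ioo a b).indicator (fun r => ∫ s in r..b, F s r) r := by
  simp_rw [indicator_triangle_eq_col]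
  by_cases hr : r ∈ Ioo a b
  · simp only [indicator_of_mem hr]
    rw [MeasureTheory.integral_indicator measurableSet_Ioc, integral_of_le hr.2.le]
  · simp [indicator_of_notMem hr]

theorem integral_integral_swap_of_triangle {a b : ℝ} (hab : a ≤ b) {F : ℝ → ℝ → E}
    (hF : IntegrableOn (uncurry F) (triangle a b)) :
    ∫ s in a..b, ∫ r in a..s, F s r = ∫ r in a..b, ∫ s in r..b, F s r := by
  have hG : Integrable ((triangle a b).indicator (uncurry F)) (volume.prod volume) :=
    (integrable_indicator_iff (measurableSet_triangle a b)).2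
      (by rwa [Measure.volume_eq_prod] at hF)
  calc ∫ s in a..b, ∫ r in a..s, F s r
      = ∫ s, ∫ r, (triangle a b).indicator (uncurry F) (s, r) := by
        simp_rw [integral_indicator_triangle_row]
        rw [MeasureTheory.integral_indicator measurableSet_Ioc, integral_of_le hab]
    _ = ∫ r, ∫ s, (triangle a b).indicator (uncurry F) (s, r) := by
        rw [← integral_prod _ hG, integral_prod_symm _ hG]
    _ = ∫ r in a..b, ∫ s in r..b, F s r := by
        simp_rw [integral_indicator_triangle_col]
        rw [MeasureTheory.integral_indicator measurableSet_Ioo, ← integral_Ioc_eq_integral_Ioo,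
          integral_of_le hab]

theorem intervalIntegrable_sub_rpow_mul_rpow_sub {p q r τ : ℝ} (hp : 0 < p) (hq : 0 < q)
    (h : r < τ) :
    IntervalIntegrable (fun s => (τ - s) ^ (q - 1) * (s - r) ^ (p - 1)) volume r τ := by
  -- the integral of a non-integrable function is `0`, while this one is a positive Beta value
  refine intervalIntegrable_of_integral_ne_zero ?_
  rw [integral_sub_rpow_mul_rpow_sub hp hq h]
  have := Real.Gamma_pos_of_pos hp
  have := Real.Gamma_pos_of_pos hq
  have := Real.Gamma_pos_of_pos (add_pos hp hq)
  have := Real.rpow_pos_of_pos (sub_pos.2 h) (p + q - 1)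
  positivity

theorem integrableOn_triangle_sub_rpow_mul_rpow_sub {p q : ℝ} (hp : 0 < p) (hq : 0 < q)
    (a b : ℝ) :
    IntegrableOn (fun z : ℝ × ℝ => (b - z.1) ^ (q - 1) * (z.1 - z.2) ^ (p - 1))
      (triangle a b) := by
  set K : ℝ → ℝ → ℝ := fun s r => (b - s) ^ (q - 1) * (s - r) ^ (p - 1)
  have hK_meas : Measurable (uncurry K) := by unfold K; fun_prop
  have hK_nonneg : ∀ s r, s ≤ b → r ≤ s → 0 ≤ K s r := fun s r hs hr =>
    mul_nonneg (Real.rpow_nonneg (sub_nonneg.2 hs) _) (Real.rpow_nonneg (sub_nonneg.2 hr) _)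
  change IntegrableOn (uncurry K) (triangle a b)
  rw [← integrable_indicator_iff (measurableSet_triangle a b),
    Measure.volume_eq_prod]
  refine (integrable_prod_iff'
    (hK_meas.indicator (measurableSet_triangle a b)).aestronglyMeasurable).2
      ⟨.of_forall fun r => ?_, ?_⟩
  · simp_rw [indicator_triangle_eq_col]
    by_cases hr : r ∈ Ioo a b
    · simp only [indicator_of_mem hr]
      exact (integrable_indicator_iff measurableSet_Ioc).2
        (intervalIntegrable_sub_rpow_mul_rpow_sub hp hq hr.2).1
    · simp [indicator_of_notMem hr]
  · have hnorm : ∀ s r, ‖(triangle a b).indicator (uncurry K) (s, r)‖ =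
        (triangle a b).indicator (uncurry K) (s, r) := fun s r =>
      Real.norm_of_nonneg (indicator_nonneg (fun z hz => hK_nonneg _ _ hz.2.2 hz.2.1.le) _)
    simp_rw [hnorm, integral_indicator_triangle_col]
    refine (integrable_indicator_iff measurableSet_Ioo).2 (IntegrableOn.congr_fun ?_
      (fun r hr => (integral_sub_rpow_mul_rpow_sub hp hq hr.2).symm) measurableSet_Ioo)
    have hrpow : IntervalIntegrable (fun r => (b - r) ^ (p + q - 1)) volume a b := by
      simpa using (intervalIntegral.intervalIntegrable_rpow' (a := b - a) (b := b - b)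
        (by linarith : (-1 : ℝ) < p + q - 1)).comp_sub_left b
    exact (hrpow.const_mul _).1.mono_set Ioo_subset_Ioc_self

theorem integrableOn_triangle_sub_rpow_mul_rpow_sub_smul {p q : ℝ} (hp : 0 < p) (hq : 0 < q)
    {a b : ℝ} {g : ℝ → E} (hg : ContinuousOn g (Icc a b)) :
    IntegrableOn (fun z : ℝ × ℝ => ((b - z.1) ^ (q - 1) * (z.1 - z.2) ^ (p - 1)) • g z.2)
      (triangle a b) := by
  have hT : triangle a b ⊆ univ ×ˢ Icc a b := fun z hz =>
    ⟨trivial, hz.1.le, hz.2.1.le.trans hz.2.2⟩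
  obtain ⟨C, hC⟩ := isCompact_Icc.exists_bound_of_continuousOn hg
  refine (integrableOn_triangle_sub_rpow_mul_rpow_sub hp hq a b).smul_bdd C
    ((hg.comp continuousOn_snd fun z hz => (hT hz).2).aestronglyMeasurable
      (measurableSet_triangle a b)) ?_
  filter_upwards [ae_restrict_mem (measurableSet_triangle a b)] with z hz
  exact hC _ (hT hz).2

theorem integral_sub_rpow_smul_integral_sub_rpow_smul [CompleteSpace E] {p q : ℝ} (hp : 0 < p)
    (hq : 0 < q) {a b : ℝ} (hab : a ≤ b) {g : ℝ → E} (hg : ContinuousOn g (Icc a b)) :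
    ∫ s in a..b, (b - s) ^ (q - 1) • ∫ r in a..s, (s - r) ^ (p - 1) • g r =
      (Real.Gamma p * Real.Gamma q / Real.Gamma (p + q)) •
        ∫ r in a..b, (b - r) ^ (p + q - 1) • g r := by
  calc ∫ s in a..b, (b - s) ^ (q - 1) • ∫ r in a..s, (s - r) ^ (p - 1) • g r
      = ∫ s in a..b, ∫ r in a..s, ((b - s) ^ (q - 1) * (s - r) ^ (p - 1)) • g r := by
        simp_rw [← intervalIntegral.integral_smul, smul_smul]
    _ = ∫ r in a..b, ∫ s in r..b, ((b - s) ^ (q - 1) * (s - r) ^ (p - 1)) • g r :=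
        integral_integral_swap_of_triangle hab
          (integrableOn_triangle_sub_rpow_mul_rpow_sub_smul hp hq hg)
    _ = ∫ r in a..b, (Real.Gamma p * Real.Gamma q / Real.Gamma (p + q) *
          (b - r) ^ (p + q - 1)) • g r := by
        simp only [integral_of_le hab, integral_Ioc_eq_integral_Ioo]
        refine setIntegral_congr_fun measurableSet_Ioo fun r hr => ?_
        rw [intervalIntegral.integral_smul_const, integral_sub_rpow_mul_rpow_sub hp hq hr.2]
    _ = _ := by simp_rw [mul_smul, intervalIntegral.integral_smul]

noncomputable def riemannLiouvilleIntegral (p a : ℝ) (g : ℝ → E) (t : ℝ) : E :=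
  (Real.Gamma p)⁻¹ • ∫ s in a..t, (t - s) ^ (p - 1) • g s

theorem riemannLiouvilleIntegral_riemannLiouvilleIntegral [CompleteSpace E] {p q : ℝ}
    (hp : 0 < p) (hq : 0 < q) {a b : ℝ} (hab : a ≤ b) {g : ℝ → E} (hg : ContinuousOn g (Icc a b)) :
    riemannLiouvilleIntegral q a (riemannLiouvilleIntegral p a g) b =
      riemannLiouvilleIntegral (p + q) a g b := by
  simp only [riemannLiouvilleIntegral, smul_comm _ (Real.Gamma p)⁻¹]
  rw [intervalIntegral.integral_smul, integral_sub_rpow_smul_integral_sub_rpow_smul hp hq hab hg,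
    smul_smul, smul_smul]
  have := (Real.Gamma_pos_of_pos hp).ne'
  have := (Real.Gamma_pos_of_pos hq).ne'
  congr 1
  field_simp

theorem riemannLiouvilleIntegral_one (a : ℝ) (g : ℝ → E) (t : ℝ) :
    riemannLiouvilleIntegral 1 a g t = ∫ s in a..t, g s := by
  simp [riemannLiouvilleIntegral]

end

/-- If `f : [a,b] × E → E` is continuous and `u : [a,b] → E` is continuous and
satisfies the Volterra equation `u(t) = u₀ + (1/Γ(α)) ∫_a^t (t-s)^{α-1} f(s,u(s)) ds` on `[a,b]`,
then `u(a) = u₀`, for every `t ∈ [a,b]` the Caputo derivative `(ᶜDᵅₐ u)(t)` (the strong derivative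
at `t` of `τ ↦ (1/Γ(1-α)) ∫_a^τ (τ-s)^{-α} (u(s) - u(a)) ds`) exists and equals `f(t, u(t))`,
and `t ↦ (ᶜDᵅₐ u)(t) = f(t, u(t))` is continuous on `[a,b]`. -/
theorem volterra_implies_caputo_ivp
    {E : Type*} [NormedAddCommGroup E] [NormedSpace ℝ E] [CompleteSpace E]
    (a b α : ℝ) (hab : a < b) (hα0 : 0 < α) (hα1 : α < 1)
    (f : ℝ → E → E)
    (hf : ContinuousOn (fun p : ℝ × E => f p.1 p.2) (Set.Icc a b ×ˢ Set.univ))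
    (u₀ : E) (u : ℝ → E)
    (hu : ContinuousOn u (Set.Icc a b))
    (hVol : ∀ t ∈ Set.Icc a b,
      u t = u₀ + (Real.Gamma α)⁻¹ • ∫ s in a..t, ((t - s) ^ (α - 1) : ℝ) • f s (u s)) :
    u a = u₀ ∧
    (∀ t ∈ Set.Icc a b,
      HasDerivWithinAt
        (fun τ => (Real.Gamma (1 - α))⁻¹ • ∫ s in a..τ, ((τ - s) ^ (-α) : ℝ) • (u s - u a))
        (f t (u t)) (Set.Icc a b) t) ∧
    ContinuousOn (fun t => f t (u t)) (Set.Icc a b) := by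
  set g : ℝ → E := fun s => f s (u s)
  have hg : ContinuousOn g (Icc a b) :=
    hf.comp (continuousOn_id.prodMk hu) fun s hs => ⟨hs, trivial⟩
  have hua : u a = u₀ := by simpa using hVol a (left_mem_Icc.2 hab.le)
  have hsub : ∀ s ∈ Icc a b, u s - u a = riemannLiouvilleIntegral α a g s := fun s hs => by
    rw [hVol s hs, hua, add_sub_cancel_left, riemannLiouvilleIntegral]
  have hcaputo : ∀ τ ∈ Icc a b,
      (Real.Gamma (1 - α))⁻¹ • ∫ s in a..τ, ((τ - s) ^ (-α) : ℝ) • (u s - u a) =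
        ∫ s in a..τ, g s := by
    intro τ hτ
    calc (Real.Gamma (1 - α))⁻¹ • ∫ s in a..τ, ((τ - s) ^ (-α) : ℝ) • (u s - u a)
        = riemannLiouvilleIntegral (1 - α) a (riemannLiouvilleIntegral α a g) τ := by
          rw [riemannLiouvilleIntegral, sub_sub_cancel_left]
          congr 1
          refine integral_congr fun s hs => ?_
          rw [uIcc_of_le hτ.1] at hs
          rw [hsub s ⟨hs.1, hs.2.trans hτ.2⟩]
      _ = riemannLiouvilleIntegral 1 a g τ := by
          rw [riemannLiouvilleIntegral_riemannLiouvilleIntegral hα0 (sub_pos.2 hα1) hτ.1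
            (hg.mono (Icc_subset_Icc_right hτ.2)), add_sub_cancel]
      _ = ∫ s in a..τ, g s := riemannLiouvilleIntegral_one a g τ
  refine ⟨hua, fun t ht => ?_, hg⟩
  have : Fact (t ∈ Icc a b) := ⟨ht⟩
  refine (integral_hasDerivWithinAt_right ?_ ?_ (hg t ht)).congr hcaputo (hcaputo t ht)
  · exact (hg.mono (uIcc_of_le ht.1 ▸ Icc_subset_Icc_right ht.2)).intervalIntegrable
  · exact ⟨Icc a b, self_mem_nhdsWithin, hg.aestronglyMeasurable measurableSet_Icc⟩
end

section
/- Let μ be a sublinear measure of non-compactness on E and let X be a nonempty, bounded (in supremum norm) and uniformly equicontinuous family of continuous functions from [a,b] to E. For t ∈ [a,b] write X(t) := {u(t) : u ∈ X}. Then for every t ∈ [a,b], μ({∫_a^t (t-s)^{α-1} u(s) ds : u ∈ X}) ≤ ∫_a^t (t-s)^{α-1} μ(X(s)) ds. -/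
open MeasureTheory Set intervalIntegral Bornology Pointwise

/-- An (axiomatic) measure of non-compactness on a real Banach space `E`:
a map `μ` on the nonempty bounded subsets of `E` with values in `[0,∞)` satisfying
the axioms (i)–(vi) of Banaś–Goebel. -/
structure MeasureOfNoncompactness (E : Type*) [NormedAddCommGroup E] [NormedSpace ℝ E] where
  μ : Set E → ℝ
  nonneg : ∀ X : Set E, X.Nonempty → IsBounded X → 0 ≤ μ X
  ker_nonempty : ∃ X : Set E, X.Nonempty ∧ IsBounded X ∧ μ X = 0
  ker_isCompact_closure : ∀ X : Set E, X.Nonempty → IsBounded X → μ X = 0 →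
    IsCompact (closure X)
  closure_eq : ∀ X : Set E, X.Nonempty → IsBounded X → μ (closure X) = μ X
  mono : ∀ X Y : Set E, X.Nonempty → IsBounded Y → X ⊆ Y → μ X ≤ μ Y
  convexHull_eq : ∀ X : Set E, X.Nonempty → IsBounded X → μ (convexHull ℝ X) = μ X
  convex_comb_le : ∀ X Y : Set E, X.Nonempty → Y.Nonempty → IsBounded X → IsBounded Y →
    ∀ l : ℝ, 0 ≤ l → l ≤ 1 → μ (l • X + (1 - l) • Y) ≤ l * μ X + (1 - l) * μ Y
  cantor : ∀ {ι : Type} (S : ι → Set E), Nonempty ι →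
    (∀ i, (S i).Nonempty) → (∀ i, IsClosed (S i)) → (∀ i, IsBounded (S i)) →
    (∀ i j, S i ⊆ S j ∨ S j ⊆ S i) →
    (∀ ε : ℝ, 0 < ε → ∃ i, μ (S i) ≤ ε) →
    (⋂ i, S i).Nonempty ∧ IsCompact (closure (⋂ i, S i))

/-- A sublinear measure of non-compactness: additionally `μ(cX) = |c|·μ(X)` and
`μ(X+Y) ≤ μ(X) + μ(Y)`. -/
structure SublinearMeasureOfNoncompactness (E : Type*) [NormedAddCommGroup E]
    [NormedSpace ℝ E] extends MeasureOfNoncompactness E where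
  smul_eq : ∀ (c : ℝ) (X : Set E), X.Nonempty → IsBounded X → μ (c • X) = |c| * μ X
  add_le : ∀ X Y : Set E, X.Nonempty → Y.Nonempty → IsBounded X → IsBounded Y →
    μ (X + Y) ≤ μ X + μ Y

/-! Partition `[a, t]` with mesh below the equicontinuity modulus `d` of `X` for a tolerance `ε`,
and let `cᵢ` be the mass of the weight `w s = (t - s) ^ (α - 1)` on the `i`-th piece. Uniformly
in `u ∈ X`, `∫ w • u` lies within `ε ∫ w` of `∑ cᵢ • u xᵢ ∈ ∑ cᵢ • X(xᵢ)`, so sublinearity gives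
`μ {∫ w • u} ≤ ∑ cᵢ μ(X(xᵢ)) + ε K ∫ w` with `K = μ (closedBall 0 1)`. The same perturbation
bound shows `|μ(X(s)) - μ(X(s'))| ≤ ε K` on the pieces, so `s ↦ μ(X(s))` is continuous and
`∑ cᵢ μ(X(xᵢ)) ≤ ∫ w μ(X(·)) + ε K ∫ w`. Let `ε → 0`. -/

theorem isBounded_finsetSum {ι E : Type*} [SeminormedAddCommGroup E] (s : Finset ι)
    {A : ι → Set E} (hA : ∀ i ∈ s, IsBounded (A i)) : IsBounded (∑ i ∈ s, A i) := by
  classical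
  induction s using Finset.induction_on with
  | empty => simp [← singleton_zero]
  | insert j s hj ih =>
    rw [Finset.sum_insert hj]
    exact (hA j (Finset.mem_insert_self j s)).add
      (ih fun i hi => hA i (Finset.mem_insert_of_mem hi))

theorem nonempty_finsetSum {ι M : Type*} [AddCommMonoid M] (s : Finset ι)
    {A : ι → Set M} (hA : ∀ i ∈ s, (A i).Nonempty) : (∑ i ∈ s, A i).Nonempty := by
  choose! x hx using hA
  exact ⟨_, finsetSum_mem_finsetSum s A x hx⟩

section WeightedRiemannSum

variable {F : Type*} [NormedAddCommGroup F] [NormedSpace ℝ F] [CompleteSpace F]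
  {w : ℝ → ℝ} {f : ℝ → F} {η : ℝ}

theorem norm_integral_smul_sub_integral_smul_le {a b : ℝ} (hab : a ≤ b) {v : F}
    (hw0 : ∀ s ∈ Icc a b, 0 ≤ w s) (hw : IntervalIntegrable w volume a b)
    (hwf : IntervalIntegrable (fun s => w s • f s) volume a b)
    (hf : ∀ s ∈ Icc a b, ‖f s - v‖ ≤ η) :
    ‖(∫ s in a..b, w s • f s) - (∫ s in a..b, w s) • v‖ ≤ η * ∫ s in a..b, w s := by
  rw [← intervalIntegral.integral_smul_const,
    ← intervalIntegral.integral_sub hwf (hw.smul_continuousOn continuousOn_const),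
    ← intervalIntegral.integral_const_mul]
  refine norm_integral_le_of_norm_le hab (ae_of_all _ fun s hs => ?_) (hw.const_mul η)
  have hs' : s ∈ Icc a b := Ioc_subset_Icc_self hs
  rw [← smul_sub, norm_smul, Real.norm_of_nonneg (hw0 s hs'), mul_comm]
  exact mul_le_mul_of_nonneg_right (hf s hs') (hw0 s hs')

theorem norm_integral_smul_sub_sum_le {x : ℕ → ℝ} (hx : Monotone x) (n : ℕ)
    (hw0 : ∀ s ∈ Icc (x 0) (x n), 0 ≤ w s) (hw : IntervalIntegrable w volume (x 0) (x n))
    (hwf : IntervalIntegrable (fun s => w s • f s) volume (x 0) (x n))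
    (hf : ∀ i < n, ∀ s ∈ Icc (x i) (x (i + 1)), ‖f s - f (x i)‖ ≤ η) :
    ‖(∫ s in x 0..x n, w s • f s) - ∑ i ∈ Finset.range n, (∫ s in x i..x (i + 1), w s) • f (x i)‖
      ≤ η * ∫ s in x 0..x n, w s := by
  have hsub : ∀ i < n, Icc (x i) (x (i + 1)) ⊆ Icc (x 0) (x n) := fun i hi =>
    Icc_subset_Icc (hx (Nat.zero_le i)) (hx hi)
  have huIcc : ∀ i < n, uIcc (x i) (x (i + 1)) ⊆ uIcc (x 0) (x n) := fun i hi => by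
    rw [uIcc_of_le (hx (Nat.le_add_right i 1)), uIcc_of_le (hx (Nat.zero_le n))]
    exact hsub i hi
  rw [← sum_integral_adjacent_intervals fun i hi => hwf.mono_set (huIcc i hi),
    ← sum_integral_adjacent_intervals fun i hi => hw.mono_set (huIcc i hi), Finset.mul_sum,
    ← Finset.sum_sub_distrib]
  refine (norm_sum_le _ _).trans (Finset.sum_le_sum fun i hi => ?_)
  have hi : i < n := Finset.mem_range.1 hi
  exact norm_integral_smul_sub_integral_smul_le (hx (Nat.le_add_right i 1))
    (fun s hs => hw0 s (hsub i hi hs)) (hw.mono_set (huIcc i hi)) (hwf.mono_set (huIcc i hi))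
    (hf i hi)

end WeightedRiemannSum

theorem exists_partition_of_step_le {a b d : ℝ} (hab : a ≤ b) (hd : 0 < d) :
    ∃ (n : ℕ) (x : ℕ → ℝ), Monotone x ∧ x 0 = a ∧ x n = b ∧ ∀ i, x (i + 1) - x i ≤ d := by
  obtain ⟨n, hn⟩ := exists_nat_gt ((b - a) / d)
  have hn0 : (0 : ℝ) < n := (div_nonneg (sub_nonneg.2 hab) hd.le).trans_lt hn
  have hstep : 0 ≤ (b - a) / n := div_nonneg (sub_nonneg.2 hab) hn0.le
  refine ⟨n, fun i => a + i * ((b - a) / n), fun i j hij => ?_, by simp, ?_, fun i => ?_⟩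
  · have : (i : ℝ) ≤ j := Nat.cast_le.2 hij
    dsimp only
    gcongr
  · dsimp only
    field_simp
    ring
  · rw [div_lt_iff₀ hd] at hn
    calc a + ((i + 1 : ℕ) : ℝ) * ((b - a) / n) - (a + i * ((b - a) / n)) = (b - a) / n := by
          push_cast
          ring
      _ ≤ d := by
          rw [div_le_iff₀ hn0]
          linarith

theorem intervalIntegrable_sub_rpow {r : ℝ} (hr : -1 < r) (t a b : ℝ) :
    IntervalIntegrable (fun s => (t - s) ^ r) volume a b := by
  simpa using (intervalIntegrable_rpow' (a := t - a) (b := t - b) hr).comp_sub_left t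

namespace SublinearMeasureOfNoncompactness

variable {E : Type*} [NormedAddCommGroup E] [NormedSpace ℝ E]
  (m : SublinearMeasureOfNoncompactness E)

theorem μ_zero : m.μ 0 = 0 := by
  have h := m.smul_eq 0 {0} (singleton_nonempty 0) isBounded_singleton
  rwa [zero_smul_set (singleton_nonempty 0), ← singleton_zero, abs_zero, zero_mul] at h

theorem μ_finsetSum_le {ι : Type*} (s : Finset ι) {A : ι → Set E}
    (hne : ∀ i ∈ s, (A i).Nonempty) (hA : ∀ i ∈ s, IsBounded (A i)) :
    m.μ (∑ i ∈ s, A i) ≤ ∑ i ∈ s, m.μ (A i) := by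
  classical
  induction s using Finset.induction_on with
  | empty => simp [μ_zero]
  | insert j s hj ih =>
    rw [Finset.sum_insert hj, Finset.sum_insert hj]
    calc m.μ (A j + ∑ i ∈ s, A i) ≤ m.μ (A j) + m.μ (∑ i ∈ s, A i) :=
          m.add_le _ _ (hne j (Finset.mem_insert_self j s))
            (nonempty_finsetSum s fun i hi => hne i (Finset.mem_insert_of_mem hi))
            (hA j (Finset.mem_insert_self j s))
            (isBounded_finsetSum s fun i hi => hA i (Finset.mem_insert_of_mem hi))
      _ ≤ m.μ (A j) + ∑ i ∈ s, m.μ (A i) := by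
          gcongr
          exact ih (fun i hi => hne i (Finset.mem_insert_of_mem hi))
            (fun i hi => hA i (Finset.mem_insert_of_mem hi))

theorem μ_closedBall {r : ℝ} (hr : 0 ≤ r) :
    m.μ (Metric.closedBall (0 : E) r) = r * m.μ (Metric.closedBall 0 1) := by
  have h := m.smul_eq r (Metric.closedBall (0 : E) 1) ⟨0, by simp⟩ Metric.isBounded_closedBall
  rwa [smul_closedBall r (0 : E) zero_le_one, smul_zero, Real.norm_of_nonneg hr, mul_one,
    abs_of_nonneg hr] at h

theorem μ_image_le_of_norm_sub_le {ι : Type*} {X : Set ι} (hne : X.Nonempty) {f g : ι → E}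
    (hg : IsBounded (g '' X)) {δ : ℝ} (hδ : 0 ≤ δ) (hfg : ∀ x ∈ X, ‖f x - g x‖ ≤ δ) :
    m.μ (f '' X) ≤ m.μ (g '' X) + δ * m.μ (Metric.closedBall 0 1) := by
  have hsub : f '' X ⊆ g '' X + Metric.closedBall 0 δ := by
    rintro _ ⟨x, hx, rfl⟩
    exact ⟨g x, mem_image_of_mem g hx, f x - g x, mem_closedBall_zero_iff.2 (hfg x hx),
      add_sub_cancel _ _⟩
  calc m.μ (f '' X) ≤ m.μ (g '' X + Metric.closedBall 0 δ) :=
        m.mono _ _ (hne.image f) (hg.add Metric.isBounded_closedBall) hsub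
    _ ≤ m.μ (g '' X) + m.μ (Metric.closedBall 0 δ) :=
        m.add_le _ _ (hne.image g) ⟨0, by simp [hδ]⟩ hg Metric.isBounded_closedBall
    _ = m.μ (g '' X) + δ * m.μ (Metric.closedBall 0 1) := by rw [m.μ_closedBall hδ]

theorem abs_μ_image_sub_μ_image_le {ι : Type*} {X : Set ι} (hne : X.Nonempty) {f g : ι → E}
    (hf : IsBounded (f '' X)) (hg : IsBounded (g '' X)) {δ : ℝ} (hδ : 0 ≤ δ)
    (hfg : ∀ x ∈ X, ‖f x - g x‖ ≤ δ) :
    |m.μ (f '' X) - m.μ (g '' X)| ≤ δ * m.μ (Metric.closedBall 0 1) := by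
  have h₁ := m.μ_image_le_of_norm_sub_le hne hg hδ hfg
  have h₂ := m.μ_image_le_of_norm_sub_le hne hf hδ fun x hx => norm_sub_rev (f x) (g x) ▸ hfg x hx
  exact abs_sub_le_iff.2 ⟨by linarith, by linarith⟩

theorem continuousOn_μ_image_eval {S : Set ℝ} {X : Set (ℝ → E)} (hne : X.Nonempty)
    (hbdd : ∀ s ∈ S, IsBounded ((fun u => u s) '' X))
    (hequi : ∀ ε : ℝ, 0 < ε → ∃ d : ℝ, 0 < d ∧ ∀ u ∈ X, ∀ s ∈ S, ∀ s' ∈ S,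
      |s - s'| ≤ d → ‖u s - u s'‖ ≤ ε) :
    ContinuousOn (fun s => m.μ ((fun u => u s) '' X)) S := by
  set K := m.μ (Metric.closedBall (0 : E) 1)
  have hK : 0 ≤ K := m.nonneg _ ⟨0, by simp⟩ Metric.isBounded_closedBall
  refine Metric.continuousOn_iff.2 fun s hs ε hε => ?_
  obtain ⟨d, hd, hdε⟩ := hequi (ε / (K + 1)) (by positivity)
  refine ⟨d, hd, fun s' hs' hss' => ?_⟩
  calc dist (m.μ ((fun u => u s') '' X)) (m.μ ((fun u => u s) '' X))
      ≤ ε / (K + 1) * K :=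
        m.abs_μ_image_sub_μ_image_le hne (hbdd s' hs') (hbdd s hs) (by positivity)
          fun u hu => hdε u hu s' hs' s hs (Real.dist_eq s' s ▸ hss'.le)
    _ < ε / (K + 1) * (K + 1) := by gcongr; linarith
    _ = ε := div_mul_cancel₀ ε (by positivity)

theorem image_sum_smul_eval_subset {T ι : Type*} (X : Set (T → E)) (s : Finset ι) (c : ι → ℝ)
    (p : ι → T) :
    (fun u => ∑ i ∈ s, c i • u (p i)) '' X ⊆ ∑ i ∈ s, c i • (fun u => u (p i)) '' X := by
  rintro _ ⟨u, hu, rfl⟩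
  exact finsetSum_mem_finsetSum _ _ _ fun i _ => smul_mem_smul_set (mem_image_of_mem _ hu)

theorem μ_image_sum_smul_eval_le {T ι : Type*} {X : Set (T → E)} (hne : X.Nonempty)
    (s : Finset ι) {c : ι → ℝ} (hc : ∀ i ∈ s, 0 ≤ c i) {p : ι → T}
    (hbdd : ∀ i ∈ s, IsBounded ((fun u => u (p i)) '' X)) :
    m.μ ((fun u => ∑ i ∈ s, c i • u (p i)) '' X)
      ≤ ∑ i ∈ s, c i * m.μ ((fun u => u (p i)) '' X) :=
  calc _ ≤ m.μ (∑ i ∈ s, c i • (fun u => u (p i)) '' X) :=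
        m.mono _ _ (hne.image _) (isBounded_finsetSum s fun i hi => (hbdd i hi).smul₀ _)
          (image_sum_smul_eval_subset X s c p)
    _ ≤ ∑ i ∈ s, m.μ (c i • (fun u => u (p i)) '' X) :=
        m.μ_finsetSum_le s (fun i _ => (hne.image _).smul_set) fun i hi => (hbdd i hi).smul₀ _
    _ = ∑ i ∈ s, c i * m.μ ((fun u => u (p i)) '' X) := Finset.sum_congr rfl fun i hi => by
        rw [m.smul_eq _ _ (hne.image _) (hbdd i hi), abs_of_nonneg (hc i hi)]

section Complete

variable [CompleteSpace E]

theorem μ_image_integral_smul_le_add {a t : ℝ} (hat : a ≤ t) {w : ℝ → ℝ}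
    (hw0 : ∀ s ∈ Icc a t, 0 ≤ w s) (hw : IntervalIntegrable w volume a t)
    {X : Set (ℝ → E)} (hne : X.Nonempty) (hcont : ∀ u ∈ X, ContinuousOn u (Icc a t))
    (hbdd : ∀ s ∈ Icc a t, IsBounded ((fun u => u s) '' X))
    (hwg : IntervalIntegrable (fun s => w s * m.μ ((fun u => u s) '' X)) volume a t)
    {ε d : ℝ} (hε : 0 ≤ ε) (hd : 0 < d)
    (hequi : ∀ u ∈ X, ∀ s ∈ Icc a t, ∀ s' ∈ Icc a t, |s - s'| ≤ d → ‖u s - u s'‖ ≤ ε) :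
    m.μ ((fun u => ∫ s in a..t, w s • u s) '' X)
      ≤ (∫ s in a..t, w s * m.μ ((fun u => u s) '' X))
        + 2 * ε * m.μ (Metric.closedBall 0 1) * ∫ s in a..t, w s := by
  obtain ⟨n, x, hx, rfl, rfl, hstep⟩ := exists_partition_of_step_le hat hd
  set g := fun s => m.μ ((fun u => u s) '' X)
  set K := m.μ (Metric.closedBall (0 : E) 1)
  have hW : 0 ≤ ∫ s in x 0..x n, w s := integral_nonneg hat hw0
  have hxI : ∀ i ≤ n, x i ∈ Icc (x 0) (x n) := fun i hi => ⟨hx (Nat.zero_le i), hx hi⟩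
  have hpiece : ∀ i < n, ∀ s ∈ Icc (x i) (x (i + 1)), s ∈ Icc (x 0) (x n) ∧ |s - x i| ≤ d :=
    fun i hi s hs => ⟨⟨(hxI i hi.le).1.trans hs.1, hs.2.trans (hxI (i + 1) hi).2⟩,
      by rw [abs_of_nonneg (sub_nonneg.2 hs.1)]; linarith [hs.2, hstep i]⟩
  set c := fun i => ∫ s in x i..x (i + 1), w s
  have hc : ∀ i ∈ Finset.range n, 0 ≤ c i := fun i hi =>
    integral_nonneg (hx (Nat.le_add_right i 1))
      fun s hs => hw0 s (hpiece i (Finset.mem_range.1 hi) s hs).1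
  have hbddx : ∀ i ∈ Finset.range n, IsBounded ((fun u => u (x i)) '' X) :=
    fun i hi => hbdd _ (hxI i (Finset.mem_range.1 hi).le)
  have hμR := m.μ_image_sum_smul_eval_le hne (Finset.range n) hc hbddx
  have hμI : m.μ ((fun u => ∫ s in x 0..x n, w s • u s) '' X)
      ≤ m.μ ((fun u => ∑ i ∈ Finset.range n, c i • u (x i)) '' X)
        + (ε * ∫ s in x 0..x n, w s) * K :=
    m.μ_image_le_of_norm_sub_le hne
      ((isBounded_finsetSum _ fun i hi => (hbddx i hi).smul₀ _).subset
        (image_sum_smul_eval_subset X _ c x)) (mul_nonneg hε hW) fun u hu =>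
      norm_integral_smul_sub_sum_le hx n hw0 hw
        (hw.smul_continuousOn (uIcc_of_le hat ▸ hcont u hu)) fun i hi s hs =>
          hequi u hu s (hpiece i hi s hs).1 (x i) (hxI i hi.le) (hpiece i hi s hs).2
  have hsum : ∑ i ∈ Finset.range n, c i * g (x i)
      ≤ (∫ s in x 0..x n, w s * g s) + ε * K * ∫ s in x 0..x n, w s := by
    have h := norm_integral_smul_sub_sum_le (f := g) (η := ε * K) hx n hw0 hw hwg
      fun i hi s hs => m.abs_μ_image_sub_μ_image_le hne (hbdd s (hpiece i hi s hs).1)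
        (hbdd (x i) (hxI i hi.le)) hε
        fun u hu => hequi u hu s (hpiece i hi s hs).1 (x i) (hxI i hi.le) (hpiece i hi s hs).2
    simp only [smul_eq_mul, Real.norm_eq_abs] at h
    linarith [(abs_le.1 h).1]
  linarith

theorem μ_image_integral_smul_le {a t : ℝ} (hat : a ≤ t) {w : ℝ → ℝ}
    (hw0 : ∀ s ∈ Icc a t, 0 ≤ w s) (hw : IntervalIntegrable w volume a t)
    {X : Set (ℝ → E)} (hne : X.Nonempty) (hcont : ∀ u ∈ X, ContinuousOn u (Icc a t))
    (hbdd : ∀ s ∈ Icc a t, IsBounded ((fun u => u s) '' X))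
    (hequi : ∀ ε : ℝ, 0 < ε → ∃ d : ℝ, 0 < d ∧ ∀ u ∈ X, ∀ s ∈ Icc a t, ∀ s' ∈ Icc a t,
      |s - s'| ≤ d → ‖u s - u s'‖ ≤ ε) :
    m.μ ((fun u => ∫ s in a..t, w s • u s) '' X)
      ≤ ∫ s in a..t, w s * m.μ ((fun u => u s) '' X) := by
  have hwg := hw.mul_continuousOn (uIcc_of_le hat ▸ m.continuousOn_μ_image_eval hne hbdd hequi)
  set K := m.μ (Metric.closedBall (0 : E) 1)
  set W := ∫ s in a..t, w s
  have hK : 0 ≤ K := m.nonneg _ ⟨0, by simp⟩ Metric.isBounded_closedBall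
  have hW : 0 ≤ W := integral_nonneg hat hw0
  refine le_of_forall_pos_le_add fun ε hε => ?_
  obtain ⟨d, hd, hdε⟩ := hequi (ε / (2 * K * W + 1)) (by positivity)
  calc _ ≤ _ + 2 * (ε / (2 * K * W + 1)) * K * W :=
        m.μ_image_integral_smul_le_add hat hw0 hw hne hcont hbdd hwg (by positivity) hd hdε
    _ = _ + ε * (2 * K * W / (2 * K * W + 1)) := by ring
    _ ≤ _ + ε := by
        gcongr
        exact mul_le_of_le_one_right hε.le ((div_le_one (by positivity)).2 (by linarith))

end Complete

end SublinearMeasureOfNoncompactness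

theorem mnc_singular_integral_le_general
    {E : Type*} [NormedAddCommGroup E] [NormedSpace ℝ E] [CompleteSpace E]
    (a b α : ℝ) (hα0 : 0 < α)
    (m : SublinearMeasureOfNoncompactness E)
    (X : Set (ℝ → E)) (hne : X.Nonempty)
    (hcont : ∀ u ∈ X, ContinuousOn u (Set.Icc a b))
    (hbdd : ∃ C : ℝ, ∀ u ∈ X, ∀ t ∈ Set.Icc a b, ‖u t‖ ≤ C)
    (hequi : ∀ ε : ℝ, 0 < ε → ∃ d : ℝ, 0 < d ∧ ∀ u ∈ X, ∀ t ∈ Set.Icc a b, ∀ s ∈ Set.Icc a b,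
      |t - s| ≤ d → ‖u t - u s‖ ≤ ε) :
    ∀ t ∈ Set.Icc a b,
      m.μ ((fun u : ℝ → E => ∫ s in a..t, ((t - s) ^ (α - 1) : ℝ) • u s) '' X)
        ≤ ∫ s in a..t, ((t - s) ^ (α - 1) : ℝ) * m.μ ((fun u : ℝ → E => u s) '' X) := by
  intro t ht
  obtain ⟨C, hC⟩ := hbdd
  have hIcc : Icc a t ⊆ Icc a b := Icc_subset_Icc_right ht.2
  refine m.μ_image_integral_smul_le ht.1 (fun s hs => Real.rpow_nonneg (sub_nonneg.2 hs.2) _)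
    (intervalIntegrable_sub_rpow (by linarith) t a t) hne (fun u hu => (hcont u hu).mono hIcc)
    (fun s hs => isBounded_iff_forall_norm_le.2 ⟨C, ?_⟩) fun ε hε => ?_
  · rintro _ ⟨u, hu, rfl⟩
    exact hC u hu s (hIcc hs)
  · obtain ⟨d, hd, h⟩ := hequi ε hε
    exact ⟨d, hd, fun u hu s hs s' hs' => h u hu s (hIcc hs) s' (hIcc hs')⟩

/-- For a sublinear measure of non-compactness `μ` on `E` and a nonempty,
uniformly bounded and uniformly equicontinuous family `X` of continuous functions
`[a,b] → E`, one has, for every `t ∈ [a,b]`,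
`μ({∫_a^t (t-s)^{α-1} u(s) ds : u ∈ X}) ≤ ∫_a^t (t-s)^{α-1} μ(X(s)) ds`. -/
theorem mnc_singular_integral_le
    {E : Type*} [NormedAddCommGroup E] [NormedSpace ℝ E] [CompleteSpace E]
    (a b α : ℝ) (hab : a < b) (hα0 : 0 < α) (hα1 : α < 1)
    (m : SublinearMeasureOfNoncompactness E)
    (X : Set (ℝ → E)) (hne : X.Nonempty)
    (hcont : ∀ u ∈ X, ContinuousOn u (Set.Icc a b))
    (hbdd : ∃ C : ℝ, ∀ u ∈ X, ∀ t ∈ Set.Icc a b, ‖u t‖ ≤ C)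
    (hequi : ∀ ε : ℝ, 0 < ε → ∃ d : ℝ, 0 < d ∧ ∀ u ∈ X, ∀ t ∈ Set.Icc a b, ∀ s ∈ Set.Icc a b,
      |t - s| ≤ d → ‖u t - u s‖ ≤ ε) :
    ∀ t ∈ Set.Icc a b,
      m.μ ((fun u : ℝ → E => ∫ s in a..t, ((t - s) ^ (α - 1) : ℝ) • u s) '' X)
        ≤ ∫ s in a..t, ((t - s) ^ (α - 1) : ℝ) * m.μ ((fun u : ℝ → E => u s) '' X) :=
  mnc_singular_integral_le_general a b α hα0 m X hne hcont hbdd hequi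
end

section
/- Let f : [a,b] → E be continuous with ‖f(τ)‖_E ≤ M for all τ ∈ [a,b], where M > 0, and define F(t) := (1/Γ(α)) ∫_a^t (t-τ)^{α-1} f(τ) dτ. Then for all t, s ∈ [a,b], ‖F(t) - F(s)‖_E ≤ (2M/Γ(α+1))·|t-s|^α; that is, F is Hölder continuous of exponent α with constant 2M/Γ(α+1). -/
/-!
Split `∫_a^t (t-τ)^{α-1} f - ∫_a^s (s-τ)^{α-1} f` (for `s ≤ t`) into an integral over `[s, t]` of
`(t-τ)^{α-1} f` and an integral over `[a, s]` of the kernel difference. For `α ≤ 1` the kernel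
difference has constant sign, so both pieces are bounded by `M` times the integral of a kernel,
computed in closed form: the first is `M (t-s)^α / α`, the second is
`M ((s-a)^α - (t-a)^α + (t-s)^α) / α ≤ M (t-s)^α / α`. Dividing by `Γ(α)` and using
`α Γ(α) = Γ(α+1)` gives the constant `2M / Γ(α+1)`.
-/

open MeasureTheory Set Interval

lemma intervalIntegrable_sub_rpow_sub_one {α : ℝ} (hα : 0 < α) (u c d : ℝ) :
    IntervalIntegrable (fun τ => (u - τ) ^ (α - 1)) volume c d := by
  simpa using (intervalIntegral.intervalIntegrable_rpow' (r := α - 1) (by linarith)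
    (a := u - c) (b := u - d)).comp_sub_left u

lemma integral_sub_rpow_sub_one {α : ℝ} (hα : 0 < α) (u c d : ℝ) :
    ∫ τ in c..d, (u - τ) ^ (α - 1) = ((u - c) ^ α - (u - d) ^ α) / α := by
  rw [intervalIntegral.integral_comp_sub_left (fun x => x ^ (α - 1)) u,
    integral_rpow (Or.inl (by linarith)), sub_add_cancel]

section

variable {E : Type*} [NormedAddCommGroup E] [NormedSpace ℝ E]

lemma norm_integral_smul_le_mul_integral {k : ℝ → ℝ} {g : ℝ → E} {c d M : ℝ} (hcd : c ≤ d)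
    (hk : IntervalIntegrable k volume c d)
    (hk0 : ∀ τ ∈ Ioo c d, 0 ≤ k τ) (hgM : ∀ τ ∈ Ioo c d, ‖g τ‖ ≤ M) :
    ‖∫ τ in c..d, k τ • g τ‖ ≤ M * ∫ τ in c..d, k τ := by
  rw [← intervalIntegral.integral_const_mul]
  refine intervalIntegral.norm_integral_le_of_norm_le hcd ?_ (hk.const_mul M)
  filter_upwards [Measure.ae_ne volume d] with τ hτd hτ
  have hτ' : τ ∈ Ioo c d := ⟨hτ.1, lt_of_le_of_ne hτ.2 hτd⟩
  rw [norm_smul, Real.norm_of_nonneg (hk0 τ hτ'), mul_comm M]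
  exact mul_le_mul_of_nonneg_left (hgM τ hτ') (hk0 τ hτ')

variable {f : ℝ → E} {a s t α M : ℝ}

lemma integral_rpow_smul_sub_integral_rpow_smul (hα : 0 < α) (has : a ≤ s) (hst : s ≤ t)
    (hf : ContinuousOn f (Icc a t)) :
    (∫ τ in a..t, (t - τ) ^ (α - 1) • f τ) - ∫ τ in a..s, (s - τ) ^ (α - 1) • f τ =
      (∫ τ in a..s, ((t - τ) ^ (α - 1) - (s - τ) ^ (α - 1)) • f τ) +
        ∫ τ in s..t, (t - τ) ^ (α - 1) • f τ := by
  have hint : ∀ u c d, [[c, d]] ⊆ Icc a t →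
      IntervalIntegrable (fun τ => (u - τ) ^ (α - 1) • f τ) volume c d := fun u c d hcd =>
    (intervalIntegrable_sub_rpow_sub_one hα u c d).smul_continuousOn (hf.mono hcd)
  have has' : [[a, s]] ⊆ Icc a t := by rw [uIcc_of_le has]; exact Icc_subset_Icc_right hst
  have hst' : [[s, t]] ⊆ Icc a t := by rw [uIcc_of_le hst]; exact Icc_subset_Icc_left has
  simp only [sub_smul]
  rw [← intervalIntegral.integral_add_adjacent_intervals (hint t a s has') (hint t s t hst'),
    intervalIntegral.integral_sub (hint t a s has') (hint s a s has')]
  abel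

lemma norm_integral_rpow_smul_le (hα : 0 < α) (hst : s ≤ t) (hfM : ∀ τ ∈ Ioo s t, ‖f τ‖ ≤ M) :
    ‖∫ τ in s..t, (t - τ) ^ (α - 1) • f τ‖ ≤ M * (t - s) ^ α / α := by
  refine (norm_integral_smul_le_mul_integral hst (intervalIntegrable_sub_rpow_sub_one hα t s t)
    (fun τ hτ => Real.rpow_nonneg (by linarith [hτ.2]) _) hfM).trans_eq ?_
  rw [integral_sub_rpow_sub_one hα, sub_self, Real.zero_rpow hα.ne', sub_zero, mul_div_assoc]

lemma norm_integral_rpow_sub_rpow_smul_le (hα0 : 0 < α) (hα1 : α ≤ 1) (has : a ≤ s)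
    (hst : s ≤ t) (hM : 0 ≤ M) (hfM : ∀ τ ∈ Ioo a s, ‖f τ‖ ≤ M) :
    ‖∫ τ in a..s, ((t - τ) ^ (α - 1) - (s - τ) ^ (α - 1)) • f τ‖ ≤ M * (t - s) ^ α / α := by
  -- Only on the open interval: at `τ = s` the rpow convention gives `(s - τ) ^ (α - 1) = 0`.
  have hkernel : ∀ τ ∈ Ioo a s, 0 ≤ (s - τ) ^ (α - 1) - (t - τ) ^ (α - 1) := fun τ hτ =>
    sub_nonneg.2 (Real.rpow_le_rpow_of_nonpos (by linarith [hτ.2]) (by linarith) (by linarith))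
  have hbound := norm_integral_smul_le_mul_integral has
    ((intervalIntegrable_sub_rpow_sub_one hα0 s a s).sub
      (intervalIntegrable_sub_rpow_sub_one hα0 t a s)) hkernel hfM
  rw [intervalIntegral.integral_sub (intervalIntegrable_sub_rpow_sub_one hα0 s a s)
    (intervalIntegrable_sub_rpow_sub_one hα0 t a s), integral_sub_rpow_sub_one hα0,
    integral_sub_rpow_sub_one hα0, sub_self, Real.zero_rpow hα0.ne'] at hbound
  have hmono : (s - a) ^ α ≤ (t - a) ^ α :=
    Real.rpow_le_rpow (by linarith) (by linarith) hα0.le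
  calc ‖∫ τ in a..s, ((t - τ) ^ (α - 1) - (s - τ) ^ (α - 1)) • f τ‖
      = ‖∫ τ in a..s, ((s - τ) ^ (α - 1) - (t - τ) ^ (α - 1)) • f τ‖ := by
        rw [← norm_neg, ← intervalIntegral.integral_neg]
        simp only [← neg_smul, neg_sub]
    _ ≤ M * (((s - a) ^ α - 0) / α - ((t - a) ^ α - (t - s) ^ α) / α) := hbound
    _ ≤ M * (t - s) ^ α / α := by
        rw [mul_div_assoc, div_sub_div_same]
        gcongr
        linarith

theorem norm_integral_rpow_smul_sub_le (hα0 : 0 < α) (hα1 : α ≤ 1) {b : ℝ}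
    (hf : ContinuousOn f (Icc a b)) (hfM : ∀ τ ∈ Icc a b, ‖f τ‖ ≤ M) (has : a ≤ s) (hst : s ≤ t)
    (htb : t ≤ b) :
    ‖(∫ τ in a..t, (t - τ) ^ (α - 1) • f τ) - ∫ τ in a..s, (s - τ) ^ (α - 1) • f τ‖ ≤
      2 * M * (t - s) ^ α / α := by
  have hM : 0 ≤ M := (norm_nonneg _).trans (hfM s ⟨has, hst.trans htb⟩)
  rw [integral_rpow_smul_sub_integral_rpow_smul hα0 has hst (hf.mono (Icc_subset_Icc_right htb))]
  calc _ ≤ M * (t - s) ^ α / α + M * (t - s) ^ α / α :=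
        (norm_add_le _ _).trans (add_le_add
          (norm_integral_rpow_sub_rpow_smul_le hα0 hα1 has hst hM fun τ hτ =>
            hfM τ ⟨hτ.1.le, by linarith [hτ.2]⟩)
          (norm_integral_rpow_smul_le hα0 hst fun τ hτ =>
            hfM τ ⟨by linarith [hτ.1], by linarith [hτ.2]⟩))
    _ = 2 * M * (t - s) ^ α / α := by ring

end

theorem fractional_integral_holder_general
    {E : Type*} [NormedAddCommGroup E] [NormedSpace ℝ E]
    (a b α M : ℝ) (hα0 : 0 < α) (hα1 : α < 1)
    (f : ℝ → E) (hf : ContinuousOn f (Set.Icc a b))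
    (hfM : ∀ τ ∈ Set.Icc a b, ‖f τ‖ ≤ M)
    (F : ℝ → E)
    (hF : ∀ t, F t = (Real.Gamma α)⁻¹ • ∫ τ in a..t, ((t - τ) ^ (α - 1) : ℝ) • f τ) :
    ∀ t ∈ Set.Icc a b, ∀ s ∈ Set.Icc a b,
      ‖F t - F s‖ ≤ 2 * M / Real.Gamma (α + 1) * |t - s| ^ α := by
  intro t ht s hs
  wlog hst : s ≤ t generalizing s t
  · rw [norm_sub_rev, abs_sub_comm]
    exact this s hs t ht (le_of_not_ge hst)
  have hΓ : 0 < Real.Gamma α := Real.Gamma_pos_of_pos hα0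
  rw [hF, hF, ← smul_sub, norm_smul, Real.norm_of_nonneg (inv_nonneg.2 hΓ.le),
    Real.Gamma_add_one hα0.ne', abs_of_nonneg (sub_nonneg.2 hst)]
  calc _ ≤ (Real.Gamma α)⁻¹ * (2 * M * (t - s) ^ α / α) := by
        gcongr
        exact norm_integral_rpow_smul_sub_le hα0 hα1.le hf hfM hs.1 hst ht.2
    _ = _ := by field_simp

/-- For continuous `f : [a,b] → E` with `‖f(τ)‖ ≤ M` on `[a,b]` (`M > 0`),
the fractional integral `F(t) = (1/Γ(α)) ∫_a^t (t-τ)^{α-1} f(τ) dτ` is Hölder continuous of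
exponent `α` with constant `2M/Γ(α+1)`: `‖F(t) - F(s)‖ ≤ (2M/Γ(α+1))·|t-s|^α` for
all `t, s ∈ [a,b]`. -/
theorem fractional_integral_holder
    {E : Type*} [NormedAddCommGroup E] [NormedSpace ℝ E] [CompleteSpace E]
    (a b α M : ℝ) (hab : a < b) (hα0 : 0 < α) (hα1 : α < 1) (hM : 0 < M)
    (f : ℝ → E) (hf : ContinuousOn f (Set.Icc a b))
    (hfM : ∀ τ ∈ Set.Icc a b, ‖f τ‖ ≤ M)
    (F : ℝ → E)
    (hF : ∀ t, F t = (Real.Gamma α)⁻¹ • ∫ τ in a..t, ((t - τ) ^ (α - 1) : ℝ) • f τ) :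
    ∀ t ∈ Set.Icc a b, ∀ s ∈ Set.Icc a b,
      ‖F t - F s‖ ≤ 2 * M / Real.Gamma (α + 1) * |t - s| ^ α :=
  fractional_integral_holder_general a b α M hα0 hα1 f hf hfM F hF
end

section
/- Let 0 < α < 1, H > 0, λ ≥ 1 and ε > 0. Let u : [a,b] → [0,∞) be continuous with u(t) ≤ (H/Γ(α)) ∫_a^t (t-s)^{α-1} u(s)^λ ds for every t ∈ [a,b], and let v : [a,b] → [0,∞) be continuous with v(t) = ε + (H/Γ(α)) ∫_a^t (t-s)^{α-1} v(s)^λ ds for every t ∈ [a,b]. Then u(t) < v(t) for every t ∈ [a,b]. -/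
/-!
Suppose `u t ≥ v t` somewhere and let `t₀` be the first such point. On `[a, t₀)` we have
`u < v`, so comparing the integral relations at `t₀` gives `u t₀ ≤ v t₀ - ε < v t₀`,
a contradiction.
-/

open MeasureTheory Set intervalIntegral

theorem exists_first_le_of_continuousOn {α β : Type*} [ConditionallyCompleteLinearOrder α]
    [TopologicalSpace α] [OrderTopology α] [LinearOrder β] [TopologicalSpace β]
    [OrderClosedTopology β] {f g : α → β} {a b : α} (hf : ContinuousOn f (Icc a b))
    (hg : ContinuousOn g (Icc a b)) (h : ∃ t ∈ Icc a b, f t ≤ g t) :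
    ∃ t₀ ∈ Icc a b, f t₀ ≤ g t₀ ∧ ∀ s ∈ Ico a t₀, g s < f s := by
  set S := {t ∈ Icc a b | f t ≤ g t}
  have hS : IsCompact S := isCompact_Icc.of_isClosed_subset
    (isClosed_Icc.isClosed_le hf hg) (sep_subset _ _)
  obtain ⟨ht₀ab, ht₀⟩ : sInf S ∈ S := hS.sInf_mem h
  refine ⟨sInf S, ht₀ab, ht₀, fun s hs => not_le.1 fun hfg => ?_⟩
  have : sInf S ≤ s := csInf_le hS.bddBelow ⟨⟨hs.1, hs.2.le.trans ht₀ab.2⟩, hfg⟩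
  exact this.not_gt hs.2

theorem intervalIntegrable_sub_rpow_mul {α a t : ℝ} {g : ℝ → ℝ} (hα : 0 < α)
    (hg : ContinuousOn g (uIcc a t)) :
    IntervalIntegrable (fun s => (t - s) ^ (α - 1) * g s) volume a t := by
  have hkernel : IntervalIntegrable (fun s => (t - s) ^ (α - 1)) volume a t := by
    simpa using ((intervalIntegrable_rpow' (r := α - 1) (a := 0) (b := t - a)
      (by linarith)).comp_sub_left t).symm
  exact hkernel.mul_continuousOn hg

theorem integral_sub_rpow_mul_mono {α a t : ℝ} {f g : ℝ → ℝ} (hα : 0 < α) (hat : a ≤ t)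
    (hf : ContinuousOn f (Icc a t)) (hg : ContinuousOn g (Icc a t))
    (hfg : ∀ s ∈ Ioo a t, f s ≤ g s) :
    ∫ s in a..t, (t - s) ^ (α - 1) * f s ≤ ∫ s in a..t, (t - s) ^ (α - 1) * g s := by
  rw [← uIcc_of_le hat] at hf hg
  refine integral_mono_on_of_le_Ioo hat (intervalIntegrable_sub_rpow_mul hα hf)
    (intervalIntegrable_sub_rpow_mul hα hg) fun s hs => ?_
  exact mul_le_mul_of_nonneg_left (hfg s hs) (Real.rpow_nonneg (by linarith [hs.2]) _)

theorem sub_solution_lt_perturbed_solution_general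
    (a b α H lam ε : ℝ) (hα0 : 0 < α) (hH : 0 < H)
    (hlam : 1 ≤ lam) (hε : 0 < ε)
    (u : ℝ → ℝ) (hu : ContinuousOn u (Set.Icc a b)) (hu0 : ∀ t ∈ Set.Icc a b, 0 ≤ u t)
    (huineq : ∀ t ∈ Set.Icc a b,
      u t ≤ H / Real.Gamma α * ∫ s in a..t, ((t - s) ^ (α - 1) : ℝ) * u s ^ lam)
    (v : ℝ → ℝ) (hv : ContinuousOn v (Set.Icc a b))
    (hveq : ∀ t ∈ Set.Icc a b,
      v t = ε + H / Real.Gamma α * ∫ s in a..t, ((t - s) ^ (α - 1) : ℝ) * v s ^ lam) :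
    ∀ t ∈ Set.Icc a b, u t < v t := by
  by_contra! hcross
  obtain ⟨t₀, ht₀, hvu, hbefore⟩ := exists_first_le_of_continuousOn hv hu hcross
  have hsub : Icc a t₀ ⊆ Icc a b := Icc_subset_Icc le_rfl ht₀.2
  have hpow (w : ℝ → ℝ) (hw : ContinuousOn w (Icc a b)) :
      ContinuousOn (fun s => w s ^ lam) (Icc a t₀) :=
    (hw.mono hsub).rpow_const fun _ _ => Or.inr (by linarith)
  have hintegral := integral_sub_rpow_mul_mono hα0 ht₀.1 (hpow u hu) (hpow v hv)
    fun s hs => Real.rpow_le_rpow (hu0 s (hsub (Ioo_subset_Icc_self hs)))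
      (hbefore s (Ioo_subset_Ico_self hs)).le (by linarith)
  have hcoeff : 0 ≤ H / Real.Gamma α := (div_pos hH (Real.Gamma_pos_of_pos hα0)).le
  have := mul_le_mul_of_nonneg_left hintegral hcoeff
  linarith [huineq t₀ ht₀, hveq t₀ ht₀]

/-- For `0 < α < 1`, `H > 0`, `λ ≥ 1`, `ε > 0`: if the continuous
nonnegative function `u` satisfies `u(t) ≤ (H/Γ(α)) ∫_a^t (t-s)^{α-1} u(s)^λ ds` on `[a,b]`
and the continuous nonnegative function `v` satisfies
`v(t) = ε + (H/Γ(α)) ∫_a^t (t-s)^{α-1} v(s)^λ ds` on `[a,b]`, then `u(t) < v(t)` for every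
`t ∈ [a,b]`. -/
theorem sub_solution_lt_perturbed_solution
    (a b α H lam ε : ℝ) (hab : a < b) (hα0 : 0 < α) (hα1 : α < 1) (hH : 0 < H)
    (hlam : 1 ≤ lam) (hε : 0 < ε)
    (u : ℝ → ℝ) (hu : ContinuousOn u (Set.Icc a b)) (hu0 : ∀ t ∈ Set.Icc a b, 0 ≤ u t)
    (huineq : ∀ t ∈ Set.Icc a b,
      u t ≤ H / Real.Gamma α * ∫ s in a..t, ((t - s) ^ (α - 1) : ℝ) * u s ^ lam)
    (v : ℝ → ℝ) (hv : ContinuousOn v (Set.Icc a b)) (hv0 : ∀ t ∈ Set.Icc a b, 0 ≤ v t)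
    (hveq : ∀ t ∈ Set.Icc a b,
      v t = ε + H / Real.Gamma α * ∫ s in a..t, ((t - s) ^ (α - 1) : ℝ) * v s ^ lam) :
    ∀ t ∈ Set.Icc a b, u t < v t :=
  sub_solution_lt_perturbed_solution_general a b α H lam ε hα0 hH hlam hε u hu hu0 huineq v hv hveq
end
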